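/- arXiv:2107.01756 — 7 statements merged into one kernel-verified Lean document; each statement's English description precedes it below -/
import Mathlib

section
/- Let f = h + conj(g) be a sense-preserving harmonic mapping on the unit disk D. Then the operator A_f(z) = ((1-|z|²)/2)·P_f(z) - conj(z) satisfies the identity A_f(z) = (1-|z|²)·∂_z log((1-|z|²)·J_f(z)^{1/2}) for all z in D, where ∂_z is the Wirtinger derivative and J_f = |h'|² - |g'|² is the Jacobian. -/
/-! For holomorphic `φ` one has `∂_z |φ|² = conj φ · φ'`, hence
`∂_z log J_f = (conj h' h'' - conj g' g'') / J_f`.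
Substituting `ω' = (g'' h' - g' h'') / h'²` and `1 - |ω|² = J_f / |h'|²` into `P_f` shows that
`P_f = ∂_z log J_f`. Since `log ((1 - |z|²) √J_f) = log (1 - |z|²) + ½ log J_f` near `z` and
`∂_z log (1 - |z|²) = -conj z / (1 - |z|²)`, multiplying by `1 - |z|²` gives `A_f`. -/

open Complex Metric Set

noncomputable section

/-- The open unit disk in ℂ. -/
def 𝔻 : Set ℂ := Metric.ball (0 : ℂ) 1

/-- Dilatation ω = g'/h' of a harmonic mapping f = h + conj g. -/
def dil (h g : ℂ → ℂ) (z : ℂ) : ℂ := deriv g z / deriv h z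

/-- Harmonic pre-Schwarzian P_f = h''/h' - conj(ω)·ω'/(1-|ω|²). -/
def Pf (h g : ℂ → ℂ) (z : ℂ) : ℂ :=
  deriv (deriv h) z / deriv h z -
    (starRingEnd ℂ) (dil h g z) * deriv (dil h g) z /
      (((1 - ‖dil h g z‖ ^ 2 : ℝ) : ℂ))

/-- The operator A_f(z) = ((1-|z|²)/2)·P_f(z) - conj z. -/
def Af (h g : ℂ → ℂ) (z : ℂ) : ℂ :=
  (((1 - ‖z‖ ^ 2 : ℝ) : ℂ)) / 2 * Pf h g z - (starRingEnd ℂ) z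

/-- The operator A_φ for an analytic φ. -/
def Aan (φ : ℂ → ℂ) (z : ℂ) : ℂ :=
  (((1 - ‖z‖ ^ 2 : ℝ) : ℂ)) / 2 * (deriv (deriv φ) z / deriv φ z) -
    (starRingEnd ℂ) z

/-- Jacobian J_f = |h'|² - |g'|². -/
def Jf (h g : ℂ → ℂ) (z : ℂ) : ℝ :=
  ‖deriv h z‖ ^ 2 - ‖deriv g z‖ ^ 2

/-- f = h + conj g is a sense-preserving harmonic mapping on 𝔻. -/
def SensePreserving (h g : ℂ → ℂ) : Prop :=
  (∀ z ∈ 𝔻, AnalyticAt ℂ h z) ∧ (∀ z ∈ 𝔻, AnalyticAt ℂ g z) ∧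
  (∀ z ∈ 𝔻, deriv h z ≠ 0) ∧ (∀ z ∈ 𝔻, ‖dil h g z‖ < 1)

/-- Hyperbolic (Poincaré) distance on 𝔻, with density 1/(1-|z|²). -/
def hypDist (z w : ℂ) : ℝ :=
  (1 / 2) * Real.log
    ((1 + ‖(z - w) / (1 - (starRingEnd ℂ) w * z)‖) /
     (1 - ‖(z - w) / (1 - (starRingEnd ℂ) w * z)‖))

/-- Wirtinger derivative ∂_z of a real-valued function. -/
def wirtinger (u : ℂ → ℝ) (z : ℂ) : ℂ :=
  ((fderiv ℝ u z 1 : ℝ) : ℂ) / 2 - Complex.I * ((fderiv ℝ u z Complex.I : ℝ) : ℂ) / 2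

open ComplexConjugate

def HasWirtingerAt (u : ℂ → ℝ) (w z : ℂ) : Prop :=
  ∃ L : ℂ →L[ℝ] ℝ, HasFDerivAt u L z ∧ ((L 1 : ℂ) - I * (L I : ℂ)) / 2 = w

theorem hasWirtingerAt_const (c : ℝ) (z : ℂ) : HasWirtingerAt (fun _ => c) 0 z :=
  ⟨0, hasFDerivAt_const c z, by simp⟩

namespace HasWirtingerAt

variable {u v : ℂ → ℝ} {w w' z : ℂ}

theorem wirtinger_eq (hu : HasWirtingerAt u w z) : wirtinger u z = w := by
  obtain ⟨L, hL, rfl⟩ := hu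
  rw [wirtinger, hL.fderiv]
  ring

theorem congr_of_eventuallyEq (hu : HasWirtingerAt u w z) (huv : v =ᶠ[nhds z] u) :
    HasWirtingerAt v w z := by
  obtain ⟨L, hL, rfl⟩ := hu
  exact ⟨L, hL.congr_of_eventuallyEq huv, rfl⟩

theorem add (hu : HasWirtingerAt u w z) (hv : HasWirtingerAt v w' z) :
    HasWirtingerAt (fun x => u x + v x) (w + w') z := by
  obtain ⟨L, hL, rfl⟩ := hu
  obtain ⟨M, hM, rfl⟩ := hv
  refine ⟨L + M, hL.add hM, ?_⟩
  simp only [add_apply, ofReal_add]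
  ring

theorem sub (hu : HasWirtingerAt u w z) (hv : HasWirtingerAt v w' z) :
    HasWirtingerAt (fun x => u x - v x) (w - w') z := by
  obtain ⟨L, hL, rfl⟩ := hu
  obtain ⟨M, hM, rfl⟩ := hv
  refine ⟨L - M, hL.sub hM, ?_⟩
  simp only [sub_apply, ofReal_sub]
  ring

theorem const_mul (hu : HasWirtingerAt u w z) (c : ℝ) :
    HasWirtingerAt (fun x => c * u x) (c * w) z := by
  obtain ⟨L, hL, rfl⟩ := hu
  refine ⟨c • L, hL.const_mul c, ?_⟩
  simp only [smul_apply, smul_eq_mul, ofReal_mul]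
  ring

theorem log (hu : HasWirtingerAt u w z) (hz : u z ≠ 0) :
    HasWirtingerAt (fun x => Real.log (u x)) (w / u z) z := by
  obtain ⟨L, hL, rfl⟩ := hu
  refine ⟨(u z)⁻¹ • L, hL.log hz, ?_⟩
  simp only [smul_apply, smul_eq_mul, ofReal_mul, ofReal_inv]
  field_simp

end HasWirtingerAt

theorem HasDerivAt.hasWirtingerAt_norm_sq {φ : ℂ → ℂ} {φ' z : ℂ}
    (hφ : HasDerivAt φ φ' z) :
    HasWirtingerAt (fun x => ‖φ x‖ ^ 2) (conj (φ z) * φ') z := by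
  refine ⟨_, hφ.complexToReal_fderiv.norm_sq, ?_⟩
  apply Complex.ext <;> simp [Complex.inner] <;> ring

section HarmonicMapping

variable {h g : ℂ → ℂ} {z : ℂ}

theorem ofReal_Jf :
    (Jf h g z : ℂ) = deriv h z * conj (deriv h z) - deriv g z * conj (deriv g z) := by
  simp only [Jf, ofReal_sub, ofReal_pow, mul_conj']

theorem Jf_pos (hh : deriv h z ≠ 0) (hω : ‖dil h g z‖ < 1) : 0 < Jf h g z := by
  rw [dil, norm_div, div_lt_one (norm_pos_iff.mpr hh)] at hω
  exact sub_pos.mpr (pow_lt_pow_left₀ hω (norm_nonneg _) two_ne_zero)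

theorem Pf_eq_div_Jf (hh : DifferentiableAt ℂ (deriv h) z) (hg : DifferentiableAt ℂ (deriv g) z)
    (hh0 : deriv h z ≠ 0) (hJ : Jf h g z ≠ 0) :
    Pf h g z = (conj (deriv h z) * deriv (deriv h) z - conj (deriv g z) * deriv (deriv g) z) /
      Jf h g z := by
  have hdil : deriv (dil h g) z =
      (deriv (deriv g) z * deriv h z - deriv g z * deriv (deriv h) z) / deriv h z ^ 2 :=
    (hg.hasDerivAt.div hh.hasDerivAt hh0).deriv
  have hh0' : conj (deriv h z) ≠ 0 := (map_ne_zero _).mpr hh0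
  have hω :
      ((1 - ‖dil h g z‖ ^ 2 : ℝ) : ℂ) = Jf h g z / (deriv h z * conj (deriv h z)) := by
    rw [dil, norm_div, div_pow, ofReal_sub, ofReal_div, ofReal_pow, ofReal_pow, ← mul_conj',
      ← mul_conj', ofReal_Jf, ofReal_one]
    field_simp
  have hJ' : (Jf h g z : ℂ) ≠ 0 := ofReal_ne_zero.mpr hJ
  rw [Pf, hdil, hω, dil, map_div₀]
  field_simp
  rw [ofReal_Jf]
  ring

theorem hasWirtingerAt_log_Jf (hh : DifferentiableAt ℂ (deriv h) z)
    (hg : DifferentiableAt ℂ (deriv g) z) (hh0 : deriv h z ≠ 0) (hJ : Jf h g z ≠ 0) :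
    HasWirtingerAt (fun w => Real.log (Jf h g w)) (Pf h g z) z := by
  rw [Pf_eq_div_Jf hh hg hh0 hJ]
  exact (hh.hasDerivAt.hasWirtingerAt_norm_sq.sub hg.hasDerivAt.hasWirtingerAt_norm_sq).log hJ

end HarmonicMapping

theorem hasWirtingerAt_log_one_sub_norm_sq {z : ℂ} (hz : 1 - ‖z‖ ^ 2 ≠ 0) :
    HasWirtingerAt (fun w => Real.log (1 - ‖w‖ ^ 2)) (-conj z / (1 - ‖z‖ ^ 2 : ℝ)) z := by
  simpa using ((hasWirtingerAt_const 1 z).sub (hasDerivAt_id z).hasWirtingerAt_norm_sq).log hz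

/-- A_f(z) = (1-|z|²)·∂_z log((1-|z|²)·J_f(z)^{1/2}). -/
theorem stmt_1 (h g : ℂ → ℂ) (hf : SensePreserving h g) :
    ∀ z ∈ 𝔻,
      Af h g z =
        (((1 - ‖z‖ ^ 2 : ℝ) : ℂ)) *
          wirtinger (fun w => Real.log ((1 - ‖w‖ ^ 2) * Real.sqrt (Jf h g w))) z := by
  obtain ⟨hh, hg, hh0, hω⟩ := hf
  intro z hz
  have hh' := (hh z hz).deriv
  have hg' := (hg z hz).deriv
  have hJ := Jf_pos (hh0 z hz) (hω z hz)
  have hd : 0 < 1 - ‖z‖ ^ 2 := by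
    rw [𝔻, mem_ball_zero_iff] at hz
    nlinarith [norm_nonneg z]
  have hsplit : (fun w => Real.log ((1 - ‖w‖ ^ 2) * Real.sqrt (Jf h g w))) =ᶠ[nhds z]
      fun w => Real.log (1 - ‖w‖ ^ 2) + 1 / 2 * Real.log (Jf h g w) := by
    have hJc : ContinuousAt (Jf h g) z :=
      (hh'.continuousAt.norm.pow 2).sub (hg'.continuousAt.norm.pow 2)
    have hdc : ContinuousAt (fun w : ℂ => 1 - ‖w‖ ^ 2) z := by fun_prop
    filter_upwards [hJc.eventually (lt_mem_nhds hJ), hdc.eventually (lt_mem_nhds hd)]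
      with w hJw hdw
    rw [Real.log_mul hdw.ne' (Real.sqrt_pos.mpr hJw).ne', Real.log_sqrt hJw.le]
    ring
  have hlogJ := hasWirtingerAt_log_Jf hh'.differentiableAt hg'.differentiableAt (hh0 z hz) hJ.ne'
  have hlog := ((hasWirtingerAt_log_one_sub_norm_sq hd.ne').add
    (hlogJ.const_mul (1 / 2))).congr_of_eventuallyEq hsplit
  rw [hlog.wirtinger_eq, Af]
  have hd' : ((1 - ‖z‖ ^ 2 : ℝ) : ℂ) ≠ 0 := ofReal_ne_zero.mpr hd.ne'
  field_simp
  push_cast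
  ring
end
end

section
/- Let f be a sense-preserving harmonic mapping on the unit disk D and let σ be a holomorphic automorphism of D. Then for every z in D, A_{f∘σ}(z) = (σ'(z)/|σ'(z)|)·A_f(σ(z)). -/
open Complex Metric Set

noncomputable section

/-!
An automorphism `σ` of `𝔻` is a rotated Möbius map `z ↦ c (a - z) / (1 - ā z)`: its inverse is
holomorphic (open mapping theorem, inverse function theorem, removable singularities), so
Schwarz's lemma applies to `σ ∘ mobius a` (where `σ a = 0`) and to its inverse, and the equality
case makes it a rotation. For such maps the Schwarz–Pick equality `(1 - |z|²) |σ'| = 1 - |σ|²`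
and the identity `A_σ(z) = -(σ'/|σ'|) · conj σ(z)` are direct computations. The chain rule gives
`P_{f∘σ} = (P_f ∘ σ) σ' + σ''/σ'`, i.e. `A_{f∘σ}(z) = (1 - |z|²)/2 · σ'(z) P_f(σ z) + A_σ(z)`,
and the two identities for `σ` turn the right-hand side into `(σ'/|σ'|) A_f(σ z)`.
-/
open Filter Topology Function ComplexConjugate

lemma mem_𝔻_iff {z : ℂ} : z ∈ 𝔻 ↔ ‖z‖ < 1 := mem_ball_zero_iff

lemma isOpen_𝔻 : IsOpen 𝔻 := isOpen_ball

section Mobius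

def mobius (a z : ℂ) : ℂ := (a - z) / (1 - conj a * z)

variable {a z : ℂ}

lemma one_sub_conj_mul_ne_zero (ha : ‖a‖ < 1) (hz : ‖z‖ ≤ 1) : 1 - conj a * z ≠ 0 := by
  refine sub_ne_zero.2 fun h => ?_
  have : ‖conj a * z‖ < 1 := by
    rw [norm_mul, Complex.norm_conj]
    exact (mul_le_of_le_one_right (norm_nonneg a) hz).trans_lt ha
  simp [← h] at this

lemma norm_one_sub_conj_mul_sq_sub_norm_sub_sq (a z : ℂ) :
    ‖1 - conj a * z‖ ^ 2 - ‖a - z‖ ^ 2 = (1 - ‖a‖ ^ 2) * (1 - ‖z‖ ^ 2) := by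
  apply Complex.ofReal_injective
  push_cast [← Complex.mul_conj']
  simp only [map_sub, map_mul, map_one, Complex.conj_conj]
  ring

lemma norm_mobius_lt_one (ha : ‖a‖ < 1) (hz : ‖z‖ < 1) : ‖mobius a z‖ < 1 := by
  have hd := norm_pos_iff.2 (one_sub_conj_mul_ne_zero ha hz.le)
  rw [mobius, norm_div, div_lt_one hd, ← sq_lt_sq₀ (norm_nonneg _) hd.le]
  have := norm_one_sub_conj_mul_sq_sub_norm_sub_sq a z
  have : 0 < (1 - ‖a‖ ^ 2) * (1 - ‖z‖ ^ 2) := by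
    apply mul_pos <;> nlinarith [norm_nonneg a, norm_nonneg z]
  linarith

lemma mobius_mobius (ha : ‖a‖ < 1) (hz : ‖z‖ < 1) : mobius a (mobius a z) = z := by
  have hd := one_sub_conj_mul_ne_zero ha hz.le
  have hd' := one_sub_conj_mul_ne_zero ha (norm_mobius_lt_one ha hz).le
  rw [mobius, div_eq_iff hd', mobius]
  linear_combination -(div_mul_cancel₀ (a - z) hd)

@[simp] lemma mobius_zero (a : ℂ) : mobius a 0 = a := by simp [mobius]

lemma hasDerivAt_mobius (hz : 1 - conj a * z ≠ 0) :
    HasDerivAt (mobius a) ((a * conj a - 1) / (1 - conj a * z) ^ 2) z := by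
  have := ((hasDerivAt_id z).const_sub a).fun_div
    (((hasDerivAt_id z).const_mul (conj a)).const_sub 1) hz
  refine (this : HasDerivAt (mobius a) _ z).congr_deriv ?_
  simp only [id]
  ring

lemma mapsTo_mobius (ha : ‖a‖ < 1) : MapsTo (mobius a) 𝔻 𝔻 := fun _ hz =>
  mem_𝔻_iff.2 (norm_mobius_lt_one ha (mem_𝔻_iff.1 hz))

lemma differentiableOn_mobius (ha : ‖a‖ < 1) : DifferentiableOn ℂ (mobius a) 𝔻 :=
  fun _ hz => (hasDerivAt_mobius (one_sub_conj_mul_ne_zero ha (mem_𝔻_iff.1 hz).le))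
    |>.differentiableAt.differentiableWithinAt

lemma hasDerivAt_deriv_mobius (hz : 1 - conj a * z ≠ 0) :
    HasDerivAt (fun w => (a * conj a - 1) / (1 - conj a * w) ^ 2)
      (2 * conj a * (a * conj a - 1) / (1 - conj a * z) ^ 3) z := by
  have := (hasDerivAt_const z (a * conj a - 1)).fun_div
    ((((hasDerivAt_id z).const_mul (conj a)).const_sub 1).fun_pow 2) (pow_ne_zero 2 hz)
  refine this.congr_deriv ?_
  simp only [id]
  field_simp
  ring

end Mobius

section RotatedMobius

variable {a c z : ℂ}

lemma deriv_mobius (hz : 1 - conj a * z ≠ 0) :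
    deriv (mobius a) z = (a * conj a - 1) / (1 - conj a * z) ^ 2 :=
  (hasDerivAt_mobius hz).deriv

lemma deriv_deriv_mobius (hz : 1 - conj a * z ≠ 0) :
    deriv (deriv (mobius a)) z = 2 * conj a * (a * conj a - 1) / (1 - conj a * z) ^ 3 := by
  have hnear : ∀ᶠ w in 𝓝 z, 1 - conj a * w ≠ 0 :=
    (continuous_const.sub (continuous_const.mul continuous_id)).continuousAt.eventually_ne hz
  have : deriv (mobius a) =ᶠ[𝓝 z] fun w => (a * conj a - 1) / (1 - conj a * w) ^ 2 := by
    filter_upwards [hnear] with w hw using deriv_mobius hw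
  exact this.deriv_eq.trans (hasDerivAt_deriv_mobius hz).deriv

lemma norm_deriv_mobius (ha : ‖a‖ < 1) (hz : 1 - conj a * z ≠ 0) :
    ‖deriv (mobius a) z‖ = (1 - ‖a‖ ^ 2) / ‖1 - conj a * z‖ ^ 2 := by
  have : a * conj a - 1 = -((1 - ‖a‖ ^ 2 : ℝ) : ℂ) := by push_cast [Complex.mul_conj']; ring
  have ha2 : 0 < 1 - ‖a‖ ^ 2 := by nlinarith [norm_nonneg a]
  rw [deriv_mobius hz, norm_div, norm_pow, this, norm_neg, Complex.norm_real,
    Real.norm_of_nonneg ha2.le]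

lemma deriv_const_mul_mobius_ne_zero (ha : ‖a‖ < 1) (hc : c ≠ 0) (hz : 1 - conj a * z ≠ 0) :
    deriv (fun w => c * mobius a w) z ≠ 0 := by
  rw [deriv_const_mul_field']
  refine mul_ne_zero hc (norm_ne_zero_iff.1 ?_)
  rw [norm_deriv_mobius ha hz]
  have ha2 : 0 < 1 - ‖a‖ ^ 2 := by nlinarith [norm_nonneg a]
  have := norm_pos_iff.2 hz
  positivity

lemma one_sub_sq_mul_norm_deriv_const_mul_mobius (ha : ‖a‖ < 1) (hc : ‖c‖ = 1) (hz : ‖z‖ < 1) :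
    (1 - ‖z‖ ^ 2) * ‖deriv (fun w => c * mobius a w) z‖ = 1 - ‖c * mobius a z‖ ^ 2 := by
  have hd := one_sub_conj_mul_ne_zero ha hz.le
  have hkey := norm_one_sub_conj_mul_sq_sub_norm_sub_sq a z
  rw [deriv_const_mul_field', norm_mul, norm_mul, hc, one_mul, one_mul,
    norm_deriv_mobius ha hd, mobius, norm_div]
  have hd_pos := norm_pos_iff.2 hd
  field_simp
  linarith

lemma Aan_const_mul_mobius (ha : ‖a‖ < 1) (hc : ‖c‖ = 1) (hz : ‖z‖ < 1) :
    Aan (fun w => c * mobius a w) z =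
      -(deriv (fun w => c * mobius a w) z / ‖deriv (fun w => c * mobius a w) z‖) *
        conj (c * mobius a z) := by
  have hd := one_sub_conj_mul_ne_zero ha hz.le
  have hd' : 1 - a * conj z ≠ 0 := by simpa using (map_ne_zero (starRingEnd ℂ)).2 hd
  have hcc : c * conj c = 1 := by simp [Complex.mul_conj', hc]
  have hc0 : c ≠ 0 := by rintro rfl; simp at hc
  have haa : a * conj a - 1 ≠ 0 := by
    rw [Complex.mul_conj', sub_ne_zero]
    intro h
    have : ‖a‖ ^ 2 = 1 := by exact_mod_cast h
    nlinarith [norm_nonneg a]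
  simp only [Aan, deriv_const_mul_field']
  rw [deriv_deriv_mobius hd, norm_mul, hc, one_mul, norm_deriv_mobius ha hd, deriv_mobius hd,
    mobius]
  push_cast [← Complex.mul_conj']
  simp only [map_mul, map_div₀, map_sub, map_one, Complex.conj_conj]
  rw [eq_inv_of_mul_eq_one_right hcc, ← neg_sub (a * conj a)]
  set k := a * conj a - 1
  set d := 1 - conj a * z
  set e := 1 - a * conj z
  field_simp
  simp only [d]
  ring

end RotatedMobius

section LocalInverse

variable {σ : ℂ → ℂ} {U V : Set ℂ} {z₀ : ℂ}

lemma Set.InjOn.not_eventually_eq (hinj : InjOn σ U) (hU : U ∈ 𝓝 z₀) :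
    ¬ ∀ᶠ z in 𝓝 z₀, σ z = σ z₀ := fun h => by
  have : ∀ᶠ z in 𝓝[≠] z₀, (σ z = σ z₀ ∧ z ∈ U) ∧ z ∈ ({z₀}ᶜ : Set ℂ) :=
    (eventually_nhdsWithin_of_eventually_nhds (h.and hU)).and eventually_mem_nhdsWithin
  obtain ⟨z, ⟨hσz, hzU⟩, hz⟩ := this.exists
  exact hz (hinj hzU (mem_of_mem_nhds hU) hσz)

lemma AnalyticOnNhd.nhds_le_map_nhds_of_injOn (hσ : AnalyticOnNhd ℂ σ U) (hinj : InjOn σ U)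
    (hU : IsOpen U) (hz₀ : z₀ ∈ U) : 𝓝 (σ z₀) ≤ map σ (𝓝 z₀) :=
  ((hσ z₀ hz₀).eventually_constant_or_nhds_le_map_nhds).resolve_left
    (hinj.not_eventually_eq (hU.mem_nhds hz₀))

lemma AnalyticOnNhd.eventually_deriv_ne_zero_of_injOn (hσ : AnalyticOnNhd ℂ σ U)
    (hinj : InjOn σ U) (hU : IsOpen U) (hz₀ : z₀ ∈ U) :
    ∀ᶠ z in 𝓝[≠] z₀, deriv σ z ≠ 0 := by
  refine ((hσ z₀ hz₀).deriv.eventually_eq_zero_or_eventually_ne_zero).resolve_left fun h => ?_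
  obtain ⟨ε, hε, hball⟩ := Metric.eventually_nhds_iff_ball.1 (h.and (hU.eventually_mem hz₀))
  refine hinj.not_eventually_eq (hU.mem_nhds hz₀) ?_
  filter_upwards [ball_mem_nhds z₀ hε] with z hz
  exact isOpen_ball.is_const_of_deriv_eq_zero (convex_ball z₀ ε).isPreconnected
    (fun w hw => (hσ w (hball w hw).2).differentiableAt.differentiableWithinAt)
    (fun w hw => (hball w hw).1) hz (mem_ball_self hε)

theorem AnalyticOnNhd.analyticOnNhd_invFunOn (hσ : AnalyticOnNhd ℂ σ U) (hU : IsOpen U)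
    (hbij : BijOn σ U V) : AnalyticOnNhd ℂ (invFunOn σ U) V := by
  set ψ := invFunOn σ U
  have hinv : InvOn ψ σ U V := hbij.invOn_invFunOn
  have hψV : MapsTo ψ V U := hbij.surjOn.mapsTo_invFunOn
  have hopen : ∀ w ∈ V, 𝓝 w ≤ map σ (𝓝 (ψ w)) := fun w hw => by
    simpa [hinv.2 hw] using hσ.nhds_le_map_nhds_of_injOn hbij.injOn hU (hψV hw)
  have hV : ∀ w ∈ V, V ∈ 𝓝 w := fun w hw =>
    hopen w hw (mem_map.2 (mem_of_superset (hU.mem_nhds (hψV hw)) hbij.mapsTo))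
  have hcont : ∀ w ∈ V, ContinuousAt ψ w := fun w hw N hN => by
    have := hopen w hw (image_mem_map (inter_mem hN (hU.mem_nhds (hψV hw))))
    refine mem_map.2 (mem_of_superset this ?_)
    rintro _ ⟨z, ⟨hzN, hzU⟩, rfl⟩
    simpa [hinv.1 hzU] using hzN
  have hdiff : ∀ w ∈ V, deriv σ (ψ w) ≠ 0 → DifferentiableAt ℂ ψ w := fun w hw hw' =>
    ((hσ _ (hψV hw)).hasStrictDerivAt.of_local_left_inverse (hcont w hw) hw'
      (eventually_of_mem (hV w hw) fun y hy => hinv.2 hy)).hasDerivAt.differentiableAt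
  intro w₀ hw₀
  have hψ_punct : Tendsto ψ (𝓝[≠] w₀) (𝓝[≠] ψ w₀) := by
    refine tendsto_nhdsWithin_of_tendsto_nhds_of_eventually_within _
      ((hcont w₀ hw₀).mono_left nhdsWithin_le_nhds) ?_
    filter_upwards [eventually_nhdsWithin_of_eventually_nhds (hV w₀ hw₀),
      eventually_mem_nhdsWithin] with w hw hne
    exact fun h => hne (hinv.2.injOn hw hw₀ h)
  refine Complex.analyticAt_of_differentiable_on_punctured_nhds_of_continuousAt ?_
    (hcont w₀ hw₀)
  filter_upwards [eventually_nhdsWithin_of_eventually_nhds (hV w₀ hw₀),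
    hψ_punct.eventually (hσ.eventually_deriv_ne_zero_of_injOn hbij.injOn hU (hψV hw₀))]
    with w hw hw' using hdiff w hw hw'

end LocalInverse

lemma norm_deriv_le_one_of_mapsTo_𝔻 {f : ℂ → ℂ} (hf : DifferentiableOn ℂ f 𝔻)
    (hmaps : MapsTo f 𝔻 𝔻) (hf0 : f 0 = 0) : ‖deriv f 0‖ ≤ 1 :=
  Complex.norm_deriv_le_one_of_mapsTo_ball hf
    (by rw [hf0]; exact hmaps.mono_right ball_subset_closedBall) one_pos

/-- Schwarz's lemma for `τ` and for `η` forces `‖τ'(0)‖ = 1`: the equality case. -/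
lemma exists_eqOn_const_mul_of_leftInvOn {τ η : ℂ → ℂ} (hτ : DifferentiableOn ℂ τ 𝔻)
    (hη : DifferentiableOn ℂ η 𝔻) (hτ𝔻 : MapsTo τ 𝔻 𝔻) (hη𝔻 : MapsTo η 𝔻 𝔻) (hτ0 : τ 0 = 0)
    (hinv : LeftInvOn η τ 𝔻) : ∃ c : ℂ, ‖c‖ = 1 ∧ EqOn τ (fun z => c * z) 𝔻 := by
  have h0 : (0 : ℂ) ∈ 𝔻 := mem_ball_self one_pos
  have hη0 : η 0 = 0 := by simpa [hτ0] using hinv h0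
  have hchain : deriv η 0 * deriv τ 0 = 1 := by
    have hid : η ∘ τ =ᶠ[𝓝 0] id := eventually_of_mem (isOpen_𝔻.mem_nhds h0) hinv
    have hη' : DifferentiableAt ℂ η (τ 0) := by
      rw [hτ0]; exact hη.differentiableAt (isOpen_𝔻.mem_nhds h0)
    have := deriv_comp 0 hη' (hτ.differentiableAt (isOpen_𝔻.mem_nhds h0))
    rwa [hid.deriv_eq, deriv_id, hτ0, eq_comm] at this
  have hτ' : ‖deriv τ 0‖ = 1 := by
    have hτle := norm_deriv_le_one_of_mapsTo_𝔻 hτ hτ𝔻 hτ0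
    have hηle := norm_deriv_le_one_of_mapsTo_𝔻 hη hη𝔻 hη0
    have := congrArg norm hchain
    rw [norm_mul, norm_one] at this
    nlinarith [norm_nonneg (deriv τ 0), norm_nonneg (deriv η 0)]
  refine ⟨deriv τ 0, hτ', fun z hz => ?_⟩
  have := Complex.affine_of_mapsTo_ball_of_norm_dslope_eq_div hτ
    (by rw [hτ0]; exact hτ𝔻.mono_right ball_subset_closedBall) h0
    (by rwa [dslope_same, div_one]) hz
  simpa [hτ0, mul_comm] using this

theorem exists_eqOn_const_mul_mobius {σ : ℂ → ℂ} (hσ : AnalyticOnNhd ℂ σ 𝔻)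
    (hbij : BijOn σ 𝔻 𝔻) :
    ∃ a c : ℂ, ‖a‖ < 1 ∧ ‖c‖ = 1 ∧ EqOn σ (fun z => c * mobius a z) 𝔻 := by
  set ψ := invFunOn σ 𝔻
  have hinv : InvOn ψ σ 𝔻 𝔻 := hbij.invOn_invFunOn
  have hψ : DifferentiableOn ℂ ψ 𝔻 :=
    (hσ.analyticOnNhd_invFunOn isOpen_𝔻 hbij).differentiableOn
  have h0 : (0 : ℂ) ∈ 𝔻 := mem_ball_self one_pos
  set a := ψ 0
  have ha : ‖a‖ < 1 := mem_𝔻_iff.1 (hbij.surjOn.mapsTo_invFunOn h0)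
  obtain ⟨c, hc, hτ⟩ := exists_eqOn_const_mul_of_leftInvOn (τ := σ ∘ mobius a)
    (η := mobius a ∘ ψ) (hσ.differentiableOn.comp (differentiableOn_mobius ha) (mapsTo_mobius ha))
    ((differentiableOn_mobius ha).comp hψ hbij.surjOn.mapsTo_invFunOn)
    (hbij.mapsTo.comp (mapsTo_mobius ha)) ((mapsTo_mobius ha).comp hbij.surjOn.mapsTo_invFunOn)
    (by simpa using hinv.2 h0)
    (fun z hz => by
      simp only [comp_apply, hinv.1 (mapsTo_mobius ha hz), mobius_mobius ha (mem_𝔻_iff.1 hz)])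
  refine ⟨a, c, ha, hc, fun z hz => ?_⟩
  simpa [mobius_mobius ha (mem_𝔻_iff.1 hz)] using hτ (mapsTo_mobius ha hz)

lemma Filter.EventuallyEq.Aan_eq {σ τ : ℂ → ℂ} {z : ℂ} (h : σ =ᶠ[𝓝 z] τ) : Aan σ z = Aan τ z := by
  rw [Aan, Aan, h.deriv_eq, h.deriv.deriv_eq]

section DiskAutomorphism

variable {σ : ℂ → ℂ} {z : ℂ}

lemma deriv_ne_zero_of_bijOn_𝔻 (hσ : AnalyticOnNhd ℂ σ 𝔻) (hbij : BijOn σ 𝔻 𝔻) (hz : z ∈ 𝔻) :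
    deriv σ z ≠ 0 := by
  obtain ⟨a, c, ha, hc, hM⟩ := exists_eqOn_const_mul_mobius hσ hbij
  rw [(hM.eventuallyEq_of_mem (isOpen_𝔻.mem_nhds hz)).deriv_eq]
  exact deriv_const_mul_mobius_ne_zero ha (norm_ne_zero_iff.1 (by simp [hc]))
    (one_sub_conj_mul_ne_zero ha (mem_𝔻_iff.1 hz).le)

lemma one_sub_sq_mul_norm_deriv_of_bijOn_𝔻 (hσ : AnalyticOnNhd ℂ σ 𝔻) (hbij : BijOn σ 𝔻 𝔻)
    (hz : z ∈ 𝔻) : (1 - ‖z‖ ^ 2) * ‖deriv σ z‖ = 1 - ‖σ z‖ ^ 2 := by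
  obtain ⟨a, c, ha, hc, hM⟩ := exists_eqOn_const_mul_mobius hσ hbij
  have hev := hM.eventuallyEq_of_mem (isOpen_𝔻.mem_nhds hz)
  rw [hev.deriv_eq, hev.eq_of_nhds]
  exact one_sub_sq_mul_norm_deriv_const_mul_mobius ha hc (mem_𝔻_iff.1 hz)

lemma Aan_of_bijOn_𝔻 (hσ : AnalyticOnNhd ℂ σ 𝔻) (hbij : BijOn σ 𝔻 𝔻) (hz : z ∈ 𝔻) :
    Aan σ z = -(deriv σ z / ‖deriv σ z‖) * conj (σ z) := by
  obtain ⟨a, c, ha, hc, hM⟩ := exists_eqOn_const_mul_mobius hσ hbij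
  have hev := hM.eventuallyEq_of_mem (isOpen_𝔻.mem_nhds hz)
  rw [hev.Aan_eq, hev.deriv_eq, hev.eq_of_nhds]
  exact Aan_const_mul_mobius ha hc (mem_𝔻_iff.1 hz)

end DiskAutomorphism

section Composition

variable {h g σ : ℂ → ℂ} {z : ℂ}

lemma deriv_comp_eventuallyEq (hh : AnalyticAt ℂ h (σ z)) (hσ : AnalyticAt ℂ σ z) :
    deriv (h ∘ σ) =ᶠ[𝓝 z] fun x => deriv h (σ x) * deriv σ x := by
  filter_upwards [hσ.eventually_analyticAt, hσ.continuousAt.eventually hh.eventually_analyticAt]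
    with x hσx hhx using deriv_comp x hhx.differentiableAt hσx.differentiableAt

lemma deriv_deriv_comp (hh : AnalyticAt ℂ h (σ z)) (hσ : AnalyticAt ℂ σ z) :
    deriv (deriv (h ∘ σ)) z =
      deriv (deriv h) (σ z) * deriv σ z ^ 2 + deriv h (σ z) * deriv (deriv σ) z := by
  have hh' : HasDerivAt (fun x => deriv h (σ x)) (deriv (deriv h) (σ z) * deriv σ z) z :=
    hh.deriv.differentiableAt.hasDerivAt.comp z hσ.differentiableAt.hasDerivAt
  rw [(deriv_comp_eventuallyEq hh hσ).deriv_eq,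
    (hh'.fun_mul hσ.deriv.differentiableAt.hasDerivAt).deriv]
  ring

lemma dil_comp_eventuallyEq (hh : AnalyticAt ℂ h (σ z)) (hg : AnalyticAt ℂ g (σ z))
    (hσ : AnalyticAt ℂ σ z) (hσ' : deriv σ z ≠ 0) :
    dil (h ∘ σ) (g ∘ σ) =ᶠ[𝓝 z] dil h g ∘ σ := by
  filter_upwards [deriv_comp_eventuallyEq hh hσ, deriv_comp_eventuallyEq hg hσ,
    hσ.deriv.continuousAt.eventually_ne hσ'] with x hhx hgx hσx
  simp only [dil, comp_apply, hhx, hgx]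
  exact mul_div_mul_right _ _ hσx

lemma Pf_comp (hh : AnalyticAt ℂ h (σ z)) (hg : AnalyticAt ℂ g (σ z)) (hσ : AnalyticAt ℂ σ z)
    (hh' : deriv h (σ z) ≠ 0) (hσ' : deriv σ z ≠ 0) :
    Pf (h ∘ σ) (g ∘ σ) z = Pf h g (σ z) * deriv σ z + deriv (deriv σ) z / deriv σ z := by
  have hω : DifferentiableAt ℂ (dil h g) (σ z) :=
    hg.deriv.differentiableAt.div hh.deriv.differentiableAt hh'
  have hdil := dil_comp_eventuallyEq hh hg hσ hσ'
  rw [Pf, Pf, deriv_deriv_comp hh hσ, (deriv_comp_eventuallyEq hh hσ).eq_of_nhds,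
    hdil.deriv_eq, hdil.eq_of_nhds, deriv_comp z hω hσ.differentiableAt, comp_apply]
  field_simp
  ring

lemma Af_comp (hh : AnalyticAt ℂ h (σ z)) (hg : AnalyticAt ℂ g (σ z)) (hσ : AnalyticAt ℂ σ z)
    (hh' : deriv h (σ z) ≠ 0) (hσ' : deriv σ z ≠ 0) :
    Af (h ∘ σ) (g ∘ σ) z =
      ((1 - ‖z‖ ^ 2 : ℝ) : ℂ) / 2 * deriv σ z * Pf h g (σ z) + Aan σ z := by
  rw [Af, Pf_comp hh hg hσ hh' hσ', Aan]
  ring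

end Composition

/-- for σ a holomorphic automorphism of 𝔻,
A_{f∘σ}(z) = (σ'(z)/|σ'(z)|)·A_f(σ(z)). -/
theorem stmt_3 (h g : ℂ → ℂ) (hf : SensePreserving h g)
    (σ : ℂ → ℂ) (hσa : ∀ z ∈ 𝔻, AnalyticAt ℂ σ z) (hσb : Set.BijOn σ 𝔻 𝔻) :
    ∀ z ∈ 𝔻,
      Af (h ∘ σ) (g ∘ σ) z =
        deriv σ z / ((‖deriv σ z‖ : ℝ) : ℂ) * Af h g (σ z) := by
  intro z hz
  obtain ⟨hh, hg, hh', -⟩ := hf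
  have hσz : σ z ∈ 𝔻 := hσb.mapsTo hz
  have hσ' := deriv_ne_zero_of_bijOn_𝔻 hσa hσb hz
  have hnorm : ((‖deriv σ z‖ : ℝ) : ℂ) ≠ 0 := by exact_mod_cast norm_ne_zero_iff.2 hσ'
  rw [Af_comp (hh _ hσz) (hg _ hσz) (hσa z hz) (hh' _ hσz) hσ', Aan_of_bijOn_𝔻 hσa hσb hz, Af,
    ← one_sub_sq_mul_norm_deriv_of_bijOn_𝔻 hσa hσb hz]
  push_cast
  field_simp
  ring
end
end

section
/- Let f be a sense-preserving harmonic mapping on the unit disk and let L(w) = a·w + b·conj(w) + c be an affine map with a, b, c ∈ ℂ and |b/a| < 1 (a ≠ 0). Then A_{L∘f} = A_f on D; in particular, the pre-Schwarzian satisfies P_{L∘f} = P_f. -/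
open Complex Metric Set

noncomputable section

/-!
Write ω for the dilatation of `f = h + conj g`. The analytic part of `L ∘ f` has derivative
`(a + b ω) h'` and `L ∘ f` has dilatation `σ(ω) = (conj b + conj a ω) / (a + b ω)`, so the
logarithmic derivative of the analytic part gains the term `b ω' / (a + b ω)`. Since
`σ' = (|a|² - |b|²) / (a + b ω)²` and `1 - |σ(ω)|² = (|a|² - |b|²)(1 - |ω|²) / |a + b ω|²`, the
dilatation term `conj σ · σ' ω' / (1 - |σ|²)` gains exactly the same term, and the two cancel.
-/

open ComplexConjugate

/-- The dilatation of `L ∘ f` for `L w = a w + b conj w + c`, as a function of the dilatation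
`w` of `f`. -/
def affineDil (a b w : ℂ) : ℂ := (conj b + conj a * w) / (a + b * w)

lemma ofReal_one_sub_sq_norm (u : ℂ) : ((1 - ‖u‖ ^ 2 : ℝ) : ℂ) = 1 - u * conj u := by
  rw [Complex.mul_conj, Complex.normSq_eq_norm_sq]
  push_cast
  ring

lemma mul_conj_sub_mul_conj_ne_zero {a b : ℂ} (hab : ‖b‖ < ‖a‖) :
    a * conj a - b * conj b ≠ 0 := by
  rw [Complex.mul_conj, Complex.mul_conj, Complex.normSq_eq_norm_sq,
    Complex.normSq_eq_norm_sq, ← ofReal_sub, ofReal_ne_zero, sub_ne_zero]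
  exact (pow_lt_pow_left₀ hab (norm_nonneg b) two_ne_zero).ne'

lemma add_mul_ne_zero_of_norm_lt {a b w : ℂ} (hab : ‖b‖ < ‖a‖) (hw : ‖w‖ ≤ 1) :
    a + b * w ≠ 0 := by
  intro h
  have : ‖a‖ ≤ ‖b‖ := by
    calc ‖a‖ = ‖b * w‖ := by rw [eq_neg_of_add_eq_zero_left h, norm_neg]
      _ ≤ ‖b‖ := by rw [norm_mul]; exact mul_le_of_le_one_right (norm_nonneg b) hw
  exact this.not_gt hab

lemma one_sub_affineDil_mul_conj {a b w : ℂ} (hw : a + b * w ≠ 0) :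
    1 - affineDil a b w * conj (affineDil a b w) =
      (a * conj a - b * conj b) * (1 - w * conj w) / ((a + b * w) * conj (a + b * w)) := by
  have hw' : conj a + conj b * conj w ≠ 0 := by
    simpa only [map_add, map_mul] using (map_ne_zero (starRingEnd ℂ)).mpr hw
  simp only [affineDil, map_div₀, map_add, map_mul, Complex.conj_conj]
  rw [div_mul_div_comm, one_sub_div (mul_ne_zero hw hw')]
  ring

lemma conj_affineDil_mul_div_one_sub_sq_norm {a b w w' : ℂ} (hab : ‖b‖ < ‖a‖) (hw : ‖w‖ < 1) :
    conj (affineDil a b w) * ((a * conj a - b * conj b) * w' / (a + b * w) ^ 2) /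
        ((1 - ‖affineDil a b w‖ ^ 2 : ℝ) : ℂ) =
      conj w * w' / ((1 - ‖w‖ ^ 2 : ℝ) : ℂ) + b * w' / (a + b * w) := by
  have hne : a + b * w ≠ 0 := add_mul_ne_zero_of_norm_lt hab hw.le
  have hne' : conj a + conj b * conj w ≠ 0 := by
    simpa only [map_add, map_mul] using (map_ne_zero (starRingEnd ℂ)).mpr hne
  have hab' := mul_conj_sub_mul_conj_ne_zero hab
  have hw' : 1 - w * conj w ≠ 0 := by
    simpa using mul_conj_sub_mul_conj_ne_zero (a := 1) (b := w) (by simpa using hw)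
  rw [ofReal_one_sub_sq_norm, ofReal_one_sub_sq_norm, one_sub_affineDil_mul_conj hne]
  simp only [affineDil, map_div₀, map_add, map_mul, Complex.conj_conj]
  rw [div_add_div _ _ hw' hne, div_mul_div_comm, div_div_div_eq,
    div_eq_div_iff (by simp [*]) (mul_ne_zero hw' hne)]
  ring

lemma HasDerivAt.affineDil {ω : ℂ → ℂ} {ω' z : ℂ} (a b : ℂ) (hω : HasDerivAt ω ω' z)
    (hne : a + b * ω z ≠ 0) :
    HasDerivAt (fun w => affineDil a b (ω w))
      ((a * conj a - b * conj b) * ω' / (a + b * ω z) ^ 2) z :=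
  (((hω.const_mul (conj a)).const_add (conj b)).div
  ((hω.const_mul b).const_add a) hne).congr_deriv (by ring)

section LinearCombination

variable {U : Set ℂ} {h g : ℂ → ℂ}

lemma deriv_linear_comb_eqOn (hU : IsOpen U) (hh : DifferentiableOn ℂ h U)
    (hg : DifferentiableOn ℂ g U) (hh' : ∀ w ∈ U, deriv h w ≠ 0) (α β : ℂ) :
    EqOn (deriv fun w => α * h w + β * g w) (fun w => (α + β * dil h g w) * deriv h w) U := by
  intro w hw
  have hhw := hh.differentiableAt (hU.mem_nhds hw)
  have hgw := hg.differentiableAt (hU.mem_nhds hw)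
  have hderiv : HasDerivAt (fun w => α * h w + β * g w) (α * deriv h w + β * deriv g w) w :=
    (hhw.hasDerivAt.const_mul α).add (hgw.hasDerivAt.const_mul β)
  rw [hderiv.deriv]
  simp only [dil]
  field_simp [hh' w hw]

lemma dil_affine_comp_eqOn (hU : IsOpen U) (hh : DifferentiableOn ℂ h U)
    (hg : DifferentiableOn ℂ g U) (hh' : ∀ w ∈ U, deriv h w ≠ 0) (a b c : ℂ) :
    EqOn (dil (fun w => a * h w + b * g w + c) (fun w => conj b * h w + conj a * g w))
      (fun w => affineDil a b (dil h g w)) U := by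
  intro w hw
  rw [dil, deriv_add_const, deriv_linear_comb_eqOn hU hh hg hh' a b hw,
    deriv_linear_comb_eqOn hU hh hg hh' _ _ hw, mul_div_mul_right _ _ (hh' w hw)]
  rfl

lemma Pf_affine_comp (hU : IsOpen U) (hh : DifferentiableOn ℂ h U)
    (hg : DifferentiableOn ℂ g U) (hh' : ∀ w ∈ U, deriv h w ≠ 0) {a b : ℂ} (c : ℂ)
    (hab : ‖b‖ < ‖a‖) {z : ℂ} (hz : z ∈ U) (hω : ‖dil h g z‖ < 1) :
    Pf (fun w => a * h w + b * g w + c) (fun w => conj b * h w + conj a * g w) z = Pf h g z := by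
  have hUz : U ∈ nhds z := hU.mem_nhds hz
  have hh'd : HasDerivAt (deriv h) (deriv (deriv h) z) z :=
    ((hh.deriv hU).differentiableAt hUz).hasDerivAt
  have hωd : HasDerivAt (dil h g) (deriv (dil h g) z) z :=
    (((hg.deriv hU).differentiableAt hUz).div ((hh.deriv hU).differentiableAt hUz)
      (hh' z hz)).hasDerivAt
  have hne : a + b * dil h g z ≠ 0 := add_mul_ne_zero_of_norm_lt hab hω.le
  have hH := deriv_linear_comb_eqOn hU hh hg hh' a b
  have hH' : deriv (deriv fun w => a * h w + b * g w) z =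
      b * deriv (dil h g) z * deriv h z + (a + b * dil h g z) * deriv (deriv h) z := by
    rw [(hH.eventuallyEq_of_mem hUz).deriv_eq]
    exact (((hωd.const_mul b).const_add a).mul hh'd).deriv
  have hD := dil_affine_comp_eqOn hU hh hg hh' a b c
  have hD' : deriv (dil (fun w => a * h w + b * g w + c)
      (fun w => conj b * h w + conj a * g w)) z =
        (a * conj a - b * conj b) * deriv (dil h g) z / (a + b * dil h g z) ^ 2 := by
    rw [(hD.eventuallyEq_of_mem hUz).deriv_eq]
    exact (hωd.affineDil a b hne).deriv
  have hlogDeriv : (b * deriv (dil h g) z * deriv h z + (a + b * dil h g z) * deriv (deriv h) z) /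
      ((a + b * dil h g z) * deriv h z) =
        deriv (deriv h) z / deriv h z + b * deriv (dil h g) z / (a + b * dil h g z) := by
    field_simp [hh' z hz]
    ring
  rw [Pf, Pf, hD hz, hD', deriv_add_const', hH', hH hz, hlogDeriv,
    conj_affineDil_mul_div_one_sub_sq_norm hab hω]
  ring

end LinearCombination

/-- for an affine map L(w) = a·w + b·conj w + c with |b/a| < 1 (a ≠ 0),
A_{L∘f} = A_f and P_{L∘f} = P_f on 𝔻.  Here L∘f = (a·h + b·g + c) + conj(conj(b)·h + conj(a)·g). -/
theorem stmt_4 (h g : ℂ → ℂ) (hf : SensePreserving h g)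
    (a b c : ℂ) (ha : a ≠ 0) (hb : ‖b / a‖ < 1) :
    ∀ z ∈ 𝔻,
      Af (fun w => a * h w + b * g w + c)
         (fun w => (starRingEnd ℂ) b * h w + (starRingEnd ℂ) a * g w) z = Af h g z ∧
      Pf (fun w => a * h w + b * g w + c)
         (fun w => (starRingEnd ℂ) b * h w + (starRingEnd ℂ) a * g w) z = Pf h g z := by
  obtain ⟨hh, hg, hh', hω⟩ := hf
  have hab : ‖b‖ < ‖a‖ := by rwa [norm_div, div_lt_one (norm_pos_iff.mpr ha)] at hb
  intro z hz
  have hP := Pf_affine_comp isOpen_ball (fun w hw => (hh w hw).differentiableWithinAt)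
    (fun w hw => (hg w hw).differentiableWithinAt) hh' c hab hz (hω z hz)
  exact ⟨by rw [Af, Af, hP], hP⟩
end
end

section
/- Let L be the harmonic half-plane mapping L = (1/2)(l + k) + conj((1/2)(l - k)), where l(z) = z/(1-z) and k(z) = z/(1-z)². Then A_L(z) = (3/2)·(1 - conj(z))/(1 - z) for every z in the unit disk, and consequently |A_L(z)| = 3/2 for all z, so μ(L) = ‖A_L‖ = 3/2. -/
open Complex Metric Set

noncomputable section

/-! The dilatation of `L` is `ω(z) = -z` and `h' = (1 - z)⁻³`, so `h''/h' = 3/(1 - z)` and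
`conj(ω) ω' / (1 - |ω|²) = conj z / (1 - |z|²)`. Hence
`A_L(z) = (3/2) ((1 - |z|²)/(1 - z) - conj z) = (3/2) (1 - conj z)/(1 - z)`, whose modulus is `3/2`
because `1 - conj z` is the conjugate of `1 - z`. -/

open Filter Topology

section Derivatives

variable {z : ℂ}

lemma hasDerivAt_div_one_sub (hz : z ≠ 1) :
    HasDerivAt (fun w : ℂ => w / (1 - w)) (1 / (1 - z) ^ 2) z := by
  have hz' : 1 - z ≠ 0 := sub_ne_zero.mpr hz.symm
  refine ((hasDerivAt_id' z).div ((hasDerivAt_const z 1).sub (hasDerivAt_id' z))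
    hz').congr_deriv ?_
  simp only [Pi.sub_apply]
  field_simp
  ring

lemma hasDerivAt_div_one_sub_sq (hz : z ≠ 1) :
    HasDerivAt (fun w : ℂ => w / (1 - w) ^ 2) ((1 + z) / (1 - z) ^ 3) z := by
  have hz' : 1 - z ≠ 0 := sub_ne_zero.mpr hz.symm
  refine ((hasDerivAt_id' z).div (((hasDerivAt_const z 1).sub (hasDerivAt_id' z)).pow 2)
    (pow_ne_zero 2 hz')).congr_deriv ?_
  simp only [Pi.sub_apply, Pi.pow_apply]
  field_simp
  ring

lemma hasDerivAt_one_div_one_sub_pow_three (hz : z ≠ 1) :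
    HasDerivAt (fun w : ℂ => 1 / (1 - w) ^ 3) (3 / (1 - z) ^ 4) z := by
  have hz' : 1 - z ≠ 0 := sub_ne_zero.mpr hz.symm
  refine ((hasDerivAt_const z 1).div (((hasDerivAt_const z 1).sub (hasDerivAt_id' z)).pow 3)
    (pow_ne_zero 3 hz')).congr_deriv ?_
  simp only [Pi.sub_apply, Pi.pow_apply]
  field_simp
  ring

end Derivatives

section General

variable {h g : ℂ → ℂ} {z : ℂ}

lemma Pf_eq_of_dil_eventuallyEq_neg (hω : dil h g =ᶠ[𝓝 z] Neg.neg) :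
    Pf h g z = deriv (deriv h) z / deriv h z - starRingEnd ℂ z / ((1 - ‖z‖ ^ 2 : ℝ) : ℂ) := by
  rw [Pf, hω.eq_of_nhds, hω.deriv_eq, deriv_neg'', norm_neg]
  simp

lemma Af_eq_of_dil_eventuallyEq_neg (hz : ‖z‖ < 1) (hω : dil h g =ᶠ[𝓝 z] Neg.neg) :
    Af h g z = ((1 - ‖z‖ ^ 2 : ℝ) : ℂ) / 2 * (deriv (deriv h) z / deriv h z) -
      3 / 2 * starRingEnd ℂ z := by
  have hz2 : ((1 - ‖z‖ ^ 2 : ℝ) : ℂ) ≠ 0 := by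
    norm_cast
    nlinarith [norm_nonneg z]
  rw [Af, Pf_eq_of_dil_eventuallyEq_neg hω]
  field_simp
  ring

end General

def halfPlaneH (z : ℂ) : ℂ := (1 / 2) * (z / (1 - z) + z / (1 - z) ^ 2)

def halfPlaneG (z : ℂ) : ℂ := (1 / 2) * (z / (1 - z) - z / (1 - z) ^ 2)

section HalfPlane

variable {z : ℂ}

lemma ne_one_of_norm_lt_one (hz : ‖z‖ < 1) : z ≠ 1 := by
  rintro rfl
  simp at hz

lemma hasDerivAt_halfPlaneH (hz : z ≠ 1) : HasDerivAt halfPlaneH (1 / (1 - z) ^ 3) z := by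
  have hz' : 1 - z ≠ 0 := sub_ne_zero.mpr hz.symm
  refine (((hasDerivAt_div_one_sub hz).add (hasDerivAt_div_one_sub_sq hz)).const_mul
    (1 / 2)).congr_deriv ?_
  field_simp
  ring

lemma hasDerivAt_halfPlaneG (hz : z ≠ 1) : HasDerivAt halfPlaneG (-z / (1 - z) ^ 3) z := by
  have hz' : 1 - z ≠ 0 := sub_ne_zero.mpr hz.symm
  refine (((hasDerivAt_div_one_sub hz).sub (hasDerivAt_div_one_sub_sq hz)).const_mul
    (1 / 2)).congr_deriv ?_
  field_simp
  ring

lemma dil_halfPlane (hz : z ≠ 1) : dil halfPlaneH halfPlaneG z = -z := by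
  have hz' : 1 - z ≠ 0 := sub_ne_zero.mpr hz.symm
  rw [dil, (hasDerivAt_halfPlaneH hz).deriv, (hasDerivAt_halfPlaneG hz).deriv]
  field_simp

lemma deriv_deriv_halfPlaneH_div (hz : z ≠ 1) :
    deriv (deriv halfPlaneH) z / deriv halfPlaneH z = 3 / (1 - z) := by
  have hz' : 1 - z ≠ 0 := sub_ne_zero.mpr hz.symm
  have hderiv : deriv halfPlaneH =ᶠ[𝓝 z] fun w => 1 / (1 - w) ^ 3 :=
    (eventually_ne_nhds hz).mono fun w hw => (hasDerivAt_halfPlaneH hw).deriv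
  rw [hderiv.deriv_eq, (hasDerivAt_one_div_one_sub_pow_three hz).deriv, hderiv.eq_of_nhds]
  field_simp

lemma Af_halfPlane (hz : ‖z‖ < 1) :
    Af halfPlaneH halfPlaneG z = 3 / 2 * (1 - starRingEnd ℂ z) / (1 - z) := by
  have hz1 := ne_one_of_norm_lt_one hz
  have hz' : 1 - z ≠ 0 := sub_ne_zero.mpr hz1.symm
  have hω : dil halfPlaneH halfPlaneG =ᶠ[𝓝 z] Neg.neg :=
    (eventually_ne_nhds hz1).mono fun w hw => dil_halfPlane hw
  rw [Af_eq_of_dil_eventuallyEq_neg hz hω, deriv_deriv_halfPlaneH_div hz1, ofReal_sub, ofReal_one,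
    ofReal_pow, ← mul_conj']
  field_simp
  ring

lemma norm_one_sub_conj_div_one_sub (hz : z ≠ 1) : ‖(1 - starRingEnd ℂ z) / (1 - z)‖ = 1 := by
  have hz' : 1 - z ≠ 0 := sub_ne_zero.mpr hz.symm
  rw [show 1 - starRingEnd ℂ z = starRingEnd ℂ (1 - z) by simp, norm_div, norm_conj,
    div_self (norm_ne_zero_iff.mpr hz')]

end HalfPlane

/-- for the harmonic half-plane mapping
L = (1/2)(l+k) + conj((1/2)(l-k)), with l(z)=z/(1-z), k(z)=z/(1-z)²,
A_L(z) = (3/2)(1-conj z)/(1-z), |A_L(z)| = 3/2 on 𝔻, and μ(L) = ‖A_L‖ = 3/2. -/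
theorem stmt_6
    (h g : ℂ → ℂ)
    (hh : ∀ z, h z = (1 / 2) * (z / (1 - z) + z / (1 - z) ^ 2))
    (hg : ∀ z, g z = (1 / 2) * (z / (1 - z) - z / (1 - z) ^ 2)) :
    (∀ z ∈ 𝔻,
        Af h g z = (3 / 2 : ℂ) * (1 - (starRingEnd ℂ) z) / (1 - z) ∧
        ‖Af h g z‖ = 3 / 2) ∧
    sInf ((fun z => ‖Af h g z‖) '' 𝔻) = 3 / 2 ∧
    sSup ((fun z => ‖Af h g z‖) '' 𝔻) = 3 / 2 := by
  obtain rfl : h = halfPlaneH := funext hh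
  obtain rfl : g = halfPlaneG := funext hg
  have hAf : ∀ z ∈ 𝔻, Af halfPlaneH halfPlaneG z = 3 / 2 * (1 - starRingEnd ℂ z) / (1 - z) :=
    fun z hz => Af_halfPlane (mem_ball_zero_iff.mp hz)
  have hnorm : ∀ z ∈ 𝔻, ‖Af halfPlaneH halfPlaneG z‖ = 3 / 2 := by
    intro z hz
    rw [hAf z hz, mul_div_assoc, norm_mul,
      norm_one_sub_conj_div_one_sub (ne_one_of_norm_lt_one (mem_ball_zero_iff.mp hz))]
    norm_num
  have himage : (fun z => ‖Af halfPlaneH halfPlaneG z‖) '' 𝔻 = {3 / 2} := by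
    rw [Set.image_congr hnorm]
    exact Set.Nonempty.image_const (nonempty_ball.mpr one_pos) _
  exact ⟨fun z hz => ⟨hAf z hz, hnorm z hz⟩, by rw [himage, csInf_singleton],
    by rw [himage, csSup_singleton]⟩
end
end

section
/- Let f = h + conj(g) be a sense-preserving harmonic mapping on the unit disk D with dilatation ω, and for |λ| = 1 let f_λ = h + λg. Then for all z in D and all λ with |λ| = 1, the identity A_f(z) = A_{f_λ}(z) - ((λ + conj(ω(z)))/(1 + λω(z)))·((1-|z|²)ω'(z))/(2(1-|ω(z)|²)) holds, where A_{f_λ}(z) = ((1-|z|²)/2)·f_λ''(z)/f_λ'(z) - conj(z). -/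
/-!
Write `g' = ω h'`, so that `g'' = ω' h' + ω h''` and `f_λ' = h' (1 + λω)`, the factor `1 + λω`
being nonzero because `|ω| < 1 = |λ|`. Then `f_λ''/f_λ' = h''/h' + λω'/(1 + λω)`, and the
identity reduces to `λ/(1 + λω) - (λ + conj ω)/((1 + λω)(1 - |ω|²)) = -conj ω/(1 - |ω|²)`,
which holds since `λ(1 - |ω|²) - (λ + conj ω) = -conj ω (1 + λω)`.
-/

open Complex Metric Set

noncomputable section

section Derivatives

variable {𝕜 : Type*} [NontriviallyNormedField 𝕜] [CompleteSpace 𝕜] {f g : 𝕜 → 𝕜} {z : 𝕜}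

theorem AnalyticAt.deriv_add_const_mul_eventuallyEq (hf : AnalyticAt 𝕜 f z)
    (hg : AnalyticAt 𝕜 g z) (c : 𝕜) :
    deriv (fun w => f w + c * g w) =ᶠ[nhds z] fun w => deriv f w + c * deriv g w := by
  filter_upwards [hf.eventually_analyticAt, hg.eventually_analyticAt] with w hfw hgw
  rw [deriv_fun_add hfw.differentiableAt (hgw.differentiableAt.const_mul c),
    deriv_const_mul c hgw.differentiableAt]

theorem AnalyticAt.deriv_deriv_add_const_mul (hf : AnalyticAt 𝕜 f z)
    (hg : AnalyticAt 𝕜 g z) (c : 𝕜) :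
    deriv (deriv fun w => f w + c * g w) z = deriv (deriv f) z + c * deriv (deriv g) z := by
  rw [(hf.deriv_add_const_mul_eventuallyEq hg c).deriv_eq,
    deriv_fun_add hf.deriv.differentiableAt (hg.deriv.differentiableAt.const_mul c),
    deriv_const_mul c hg.deriv.differentiableAt]

end Derivatives

theorem dil_mul_deriv (h g : ℂ → ℂ) {z : ℂ} (hz : deriv h z ≠ 0) :
    dil h g z * deriv h z = deriv g z :=
  div_mul_cancel₀ _ hz

theorem deriv_deriv_eq_deriv_dil_mul_add {h g : ℂ → ℂ} {z : ℂ} (hh : AnalyticAt ℂ h z)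
    (hg : AnalyticAt ℂ g z) (hz : deriv h z ≠ 0) :
    deriv (deriv g) z = deriv (dil h g) z * deriv h z + dil h g z * deriv (deriv h) z := by
  have hquot : deriv (dil h g) z =
      (deriv (deriv g) z * deriv h z - deriv g z * deriv (deriv h) z) / deriv h z ^ 2 :=
    deriv_fun_div hg.deriv.differentiableAt hh.deriv.differentiableAt hz
  rw [hquot, dil]
  field_simp
  ring

theorem one_add_mul_ne_zero_of_norm_lt_one {𝕜 : Type*} [NormedDivisionRing 𝕜] {lam w : 𝕜} (hlam : ‖lam‖ = 1) (hw : ‖w‖ < 1) :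
    1 + lam * w ≠ 0 := by
  intro h
  have : ‖lam * w‖ = 1 := by rw [eq_neg_of_add_eq_zero_right h, norm_neg, norm_one]
  rw [norm_mul, hlam, one_mul] at this
  exact hw.ne this

theorem ofReal_one_sub_norm_sq (w : ℂ) :
    ((1 - ‖w‖ ^ 2 : ℝ) : ℂ) = 1 - w * (starRingEnd ℂ) w := by
  rw [Complex.mul_conj, Complex.normSq_eq_norm_sq]
  push_cast
  ring

theorem preSchwarzian_rotation_identity {K : Type*} [Field K] (H H₂ ω ω' c lam p : K)
    (hH : H ≠ 0) (hp : p = 1 - ω * c) (hp₀ : p ≠ 0) (hlam : 1 + lam * ω ≠ 0) :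
    H₂ / H - c * ω' / p =
      (H₂ + lam * (ω' * H + ω * H₂)) / (H + lam * (ω * H)) -
        (lam + c) / (1 + lam * ω) * ω' / p := by
  have hden : H + lam * (ω * H) = H * (1 + lam * ω) := by ring
  rw [hden]
  field_simp
  rw [hp]
  ring

/-- for f_λ = h + λg with |λ| = 1,
A_f(z) = A_{f_λ}(z) - ((λ+conj ω)/(1+λω))·(1-|z|²)ω'(z)/(2(1-|ω|²)). -/
theorem stmt_8 (h g : ℂ → ℂ) (hf : SensePreserving h g) :
    ∀ z ∈ 𝔻, ∀ lam : ℂ, ‖lam‖ = 1 →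
      Af h g z =
        Aan (fun w => h w + lam * g w) z -
          ((lam + (starRingEnd ℂ) (dil h g z)) / (1 + lam * dil h g z)) *
            ((((1 - ‖z‖ ^ 2 : ℝ) : ℂ)) * deriv (dil h g) z) /
              (2 * (((1 - ‖dil h g z‖ ^ 2 : ℝ) : ℂ))) := by
  intro z hz lam hlam
  obtain ⟨hh, hg, hh', hω⟩ := hf
  have hp₀ : ((1 - ‖dil h g z‖ ^ 2 : ℝ) : ℂ) ≠ 0 :=
    Complex.ofReal_ne_zero.2 (sub_pos.2 (pow_lt_one₀ (norm_nonneg _) (hω z hz) two_ne_zero)).ne'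
  have key := preSchwarzian_rotation_identity (deriv h z) (deriv (deriv h) z) (dil h g z)
    (deriv (dil h g) z) ((starRingEnd ℂ) (dil h g z)) lam _ (hh' z hz)
    (ofReal_one_sub_norm_sq _) hp₀ (one_add_mul_ne_zero_of_norm_lt_one hlam (hω z hz))
  rw [Af, Pf, Aan, ((hh z hz).deriv_add_const_mul_eventuallyEq (hg z hz) lam).eq_of_nhds,
    (hh z hz).deriv_deriv_add_const_mul (hg z hz) lam,
    deriv_deriv_eq_deriv_dil_mul_add (hh z hz) (hg z hz) (hh' z hz), ← dil_mul_deriv h g (hh' z hz)]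
  linear_combination (((1 - ‖z‖ ^ 2 : ℝ) : ℂ)) / 2 * key
end
end

section
/- Let f = h + conj(g) be a sense-preserving harmonic mapping on the unit disk D such that for every λ with |λ| = 1 the analytic function f_λ = h + λg satisfies μ(f_λ) := inf_{z∈D} |A_{f_λ}(z)| = 1. Then 1 ≤ μ(f) ≤ 3/2, where μ(f) = inf_{z∈D}|A_f(z)|. -/
open Complex Metric Set

noncomputable section

/-! ### Auxiliary lemmas -/

lemma one_add_ne {x : ℂ} (hx : ‖x‖ < 1) : 1 + x ≠ 0 := by
  intro H
  have : x = -1 := by linear_combination H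
  rw [this] at hx; simp at hx

lemma moeb_den_ne {a w : ℂ} (ha : ‖a‖ < 1) (hw : ‖w‖ < 1) :
    1 + (starRingEnd ℂ) a * w ≠ 0 := by
  apply one_add_ne
  rw [norm_mul, Complex.norm_conj]
  nlinarith [norm_nonneg a, norm_nonneg w]

lemma normSq_diff (a w : ℂ) :
    Complex.normSq (1 + (starRingEnd ℂ) a * w) - Complex.normSq (w + a)
      = (1 - Complex.normSq a) * (1 - Complex.normSq w) := by
  simp only [Complex.normSq_apply, Complex.add_re, Complex.add_im, Complex.mul_re,
    Complex.mul_im, Complex.conj_re, Complex.conj_im, Complex.one_re, Complex.one_im]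
  ring

lemma moeb_maps {a w : ℂ} (ha : ‖a‖ < 1) (hw : ‖w‖ < 1) :
    ‖(w + a) / (1 + (starRingEnd ℂ) a * w)‖ < 1 := by
  rw [norm_div, div_lt_one (norm_pos_iff.mpr (moeb_den_ne ha hw))]
  have h1 : Complex.normSq (w + a) < Complex.normSq (1 + (starRingEnd ℂ) a * w) := by
    have := normSq_diff a w
    have ha' : Complex.normSq a < 1 := by rw [← Complex.sq_norm]; nlinarith [norm_nonneg a]
    have hw' : Complex.normSq w < 1 := by rw [← Complex.sq_norm]; nlinarith [norm_nonneg w]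
    nlinarith
  have := norm_nonneg (w + a)
  rw [← Complex.sq_norm, ← Complex.sq_norm] at h1
  nlinarith [norm_nonneg (1 + (starRingEnd ℂ) a * w)]

lemma moeb_hasDerivAt (a : ℂ) {z : ℂ} (hz : 1 + (starRingEnd ℂ) a * z ≠ 0) :
    HasDerivAt (fun w => (w + a) / (1 + (starRingEnd ℂ) a * w))
      ((1 - (starRingEnd ℂ) a * a) / (1 + (starRingEnd ℂ) a * z) ^ 2) z := by
  have h1 : HasDerivAt (fun w : ℂ => w + a) 1 z := (hasDerivAt_id z).add_const a
  have h2 : HasDerivAt (fun w : ℂ => 1 + (starRingEnd ℂ) a * w) ((starRingEnd ℂ) a) z := by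
    simpa using ((hasDerivAt_id z).const_mul ((starRingEnd ℂ) a)).const_add 1
  have := h1.fun_div h2 hz
  refine this.congr_deriv ?_
  ring

/-- Schwarz–Pick lemma. -/
lemma schwarz_pick {ω : ℂ → ℂ} (hd : DifferentiableOn ℂ ω (ball 0 1))
    (hm : MapsTo ω (ball 0 1) (ball 0 1)) {z : ℂ} (hz : z ∈ ball (0:ℂ) 1) :
    (1 - ‖z‖ ^ 2) * ‖deriv ω z‖ ≤ 1 - ‖ω z‖ ^ 2 := by
  have hball : ∀ w : ℂ, w ∈ ball (0:ℂ) 1 ↔ ‖w‖ < 1 := by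
    intro w; rw [mem_ball_zero_iff]
  have ha : ‖z‖ < 1 := (hball z).1 hz
  have hb : ‖ω z‖ < 1 := (hball _).1 (hm hz)
  set a := z
  set b := ω z with hbdef
  set Ma : ℂ → ℂ := fun w => (w + a) / (1 + (starRingEnd ℂ) a * w) with hMa
  set Mb : ℂ → ℂ := fun w => (w + (-b)) / (1 + (starRingEnd ℂ) (-b) * w) with hMb
  set F : ℂ → ℂ := fun w => Mb (ω (Ma w)) with hF
  have hMaMem : ∀ w ∈ ball (0:ℂ) 1, Ma w ∈ ball (0:ℂ) 1 := by
    intro w hw; rw [hball]; exact moeb_maps ha ((hball w).1 hw)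
  have hMbMem : ∀ w ∈ ball (0:ℂ) 1, Mb w ∈ ball (0:ℂ) 1 := by
    intro w hw; rw [hball]
    exact moeb_maps (by simpa using hb) ((hball w).1 hw)
  have hFd : DifferentiableOn ℂ F (ball 0 1) := by
    intro w hw
    have hw1 : ‖w‖ < 1 := (hball w).1 hw
    have d1 : DifferentiableAt ℂ Ma w := (moeb_hasDerivAt a (moeb_den_ne ha hw1)).differentiableAt
    have hMw : Ma w ∈ ball (0:ℂ) 1 := hMaMem w hw
    have d2 : DifferentiableAt ℂ ω (Ma w) := hd.differentiableAt (isOpen_ball.mem_nhds hMw)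
    have hωMw : ω (Ma w) ∈ ball (0:ℂ) 1 := hm hMw
    have d3 : DifferentiableAt ℂ Mb (ω (Ma w)) :=
      (moeb_hasDerivAt (-b) (moeb_den_ne (by simpa using hb) ((hball _).1 hωMw))).differentiableAt
    exact ((d3.comp w (d2.comp w d1))).differentiableWithinAt
  have hFm : MapsTo F (ball 0 1) (ball 0 1) := by
    intro w hw; exact hMbMem _ (hm (hMaMem w hw))
  have hF0 : F 0 = 0 := by
    have hMa0 : Ma 0 = a := by simp [hMa]
    simp [hF, hMa0, hMb, ← hbdef]
    exact Or.inl (add_neg_cancel _)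
  -- Schwarz lemma at 0
  have hS : ‖deriv F 0‖ ≤ 1 :=
    norm_deriv_le_one_of_mapsTo_ball hFd (by rw [hF0]; exact hFm.mono_right ball_subset_closedBall) one_pos
  -- compute deriv F 0 by the chain rule
  have hMa0 : Ma 0 = a := by simp [hMa]
  have d1 : HasDerivAt Ma (1 - (starRingEnd ℂ) a * a) 0 := by
    have := moeb_hasDerivAt a (z := 0) (by simpa using moeb_den_ne ha (by norm_num : ‖(0:ℂ)‖ < 1))
    simpa using this
  have d2 : HasDerivAt ω (deriv ω a) a :=
    (hd.differentiableAt (isOpen_ball.mem_nhds hz)).hasDerivAt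
  have hden : 1 + (starRingEnd ℂ) (-b) * b ≠ 0 := moeb_den_ne (by simpa using hb) hb
  have d3 : HasDerivAt Mb ((1 - (starRingEnd ℂ) (-b) * (-b)) / (1 + (starRingEnd ℂ) (-b) * b) ^ 2) b :=
    moeb_hasDerivAt (-b) hden
  have d2' : HasDerivAt ω (deriv ω a) (Ma 0) := by rw [hMa0]; exact d2
  have d3' : HasDerivAt Mb ((1 - (starRingEnd ℂ) (-b) * (-b)) / (1 + (starRingEnd ℂ) (-b) * b) ^ 2) (ω (Ma 0)) := by
    rw [hMa0]; exact d3
  have dF : HasDerivAt F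
      (((1 - (starRingEnd ℂ) (-b) * (-b)) / (1 + (starRingEnd ℂ) (-b) * b) ^ 2)
        * (deriv ω a * (1 - (starRingEnd ℂ) a * a))) 0 := by
    have := (d3'.comp 0 (d2'.comp 0 d1))
    simpa [Function.comp_def, hF] using this
  rw [dF.deriv] at hS
  have key : ∀ x : ℂ, (1 : ℂ) - (starRingEnd ℂ) x * x = ((1 - ‖x‖ ^ 2 : ℝ) : ℂ) := by
    intro x
    push_cast
    rw [mul_comm, Complex.mul_conj]
    norm_cast
    rw [Complex.sq_norm]
  have e1 : (1 : ℂ) - (starRingEnd ℂ) (-b) * (-b) = ((1 - ‖b‖ ^ 2 : ℝ) : ℂ) := by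
    rw [map_neg, neg_mul_neg]; exact key b
  have e2 : (1 : ℂ) + (starRingEnd ℂ) (-b) * b = ((1 - ‖b‖ ^ 2 : ℝ) : ℂ) := by
    rw [map_neg, neg_mul, ← sub_eq_add_neg]; exact key b
  rw [e1, e2, key a] at hS
  set A : ℝ := 1 - ‖a‖ ^ 2 with hAdef
  set B : ℝ := 1 - ‖b‖ ^ 2 with hBdef
  have hA : 0 < A := by nlinarith [norm_nonneg a]
  have hB : 0 < B := by nlinarith [norm_nonneg b]
  have habs : ‖((B : ℂ)) / ((B : ℂ)) ^ 2 * (deriv ω a * ((A : ℂ)))‖ =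
      B / B ^ 2 * (‖deriv ω a‖ * A) := by
    rw [norm_mul, norm_mul, norm_div, norm_pow, Complex.norm_real, Real.norm_eq_abs, Complex.norm_real, Real.norm_eq_abs,
      abs_of_pos hA, abs_of_pos hB]
  rw [habs] at hS
  have hBB : B / B ^ 2 = 1 / B := by field_simp
  rw [hBB, div_mul_eq_mul_div, one_mul, div_le_one hB] at hS
  linarith

lemma alg_one (hd gd hdd gdd l : ℂ) (h0 : hd ≠ 0) (h1 : 1 + l * (gd / hd) ≠ 0) :
    (hdd + l * gdd) / (hd + l * gd) =
      hdd / hd + l * ((gdd * hd - gd * hdd) / hd ^ 2) / (1 + l * (gd / hd)) := by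
  have h3 : hd + l * gd = hd * (1 + l * (gd / hd)) := by field_simp
  have hsum : hd + l * gd ≠ 0 := h3 ▸ mul_ne_zero h0 h1
  field_simp
  ring

lemma alg_two (q ω ωd c t l s : ℂ) (h1 : 1 + l * ω ≠ 0) (h2 : t ≠ 0) (ht : t = 1 - ω * c) :
    s * (q + l * ωd / (1 + l * ω)) =
      s * (q - c * ωd / t) + (l + c) / (1 + l * ω) * (s * ωd / t) := by
  subst ht
  field_simp
  ring

lemma alg_full (hd gd hdd gdd l c s t zb ω ωd : ℂ) (h0 : hd ≠ 0)
    (hω : ω = gd / hd) (hωd : ωd = (gdd * hd - gd * hdd) / hd ^ 2)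
    (h1 : 1 + l * ω ≠ 0) (h2 : t ≠ 0) (ht : t = 1 - ω * c) :
    s * ((hdd + l * gdd) / (hd + l * gd)) - zb =
      (s * (hdd / hd - c * ωd / t) - zb) + (l + c) / (1 + l * ω) * (s * ωd / t) := by
  subst hω hωd
  rw [alg_one hd gd hdd gdd l h0 h1]
  have := alg_two (hdd / hd) (gd / hd) ((gdd * hd - gd * hdd) / hd ^ 2) c t l s h1 h2 ht
  linear_combination this

/-- The key pointwise identity and bounds. -/
lemma key_lemma (h g : ℂ → ℂ) (hf : SensePreserving h g) {z : ℂ} (hz : z ∈ 𝔻) :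
    ∃ T : ℂ, ‖T‖ ≤ 1 / 2 ∧
      (∀ l : ℂ, ‖l‖ = 1 → ∃ u : ℂ, ‖u‖ = 1 ∧
        Aan (fun w => h w + l * g w) z = Af h g z + u * T) ∧
      (∀ u : ℂ, ‖u‖ = 1 → ∃ l : ℂ, ‖l‖ = 1 ∧
        Aan (fun w => h w + l * g w) z = Af h g z + u * T) := by
  obtain ⟨hh, hg, hh', hωlt⟩ := hf
  have hmem : 𝔻 ∈ nhds z := isOpen_ball.mem_nhds hz
  have hhA : AnalyticOnNhd ℂ h 𝔻 := hh
  have hgA : AnalyticOnNhd ℂ g 𝔻 := hg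
  have hhd : DifferentiableAt ℂ (deriv h) z := ((hhA.deriv) z hz).differentiableAt
  have hgd : DifferentiableAt ℂ (deriv g) z := ((hgA.deriv) z hz).differentiableAt
  have hωz : ‖dil h g z‖ < 1 := hωlt z hz
  have hz1 : ‖z‖ < 1 := by simpa [𝔻, mem_ball_zero_iff] using hz
  -- derivative of the dilatation
  have hdil : deriv (dil h g) z
      = (deriv (deriv g) z * deriv h z - deriv g z * deriv (deriv h) z) / (deriv h z) ^ 2 := by
    have e : dil h g = fun w => deriv g w / deriv h w := rfl
    rw [e, deriv_fun_div hgd hhd (hh' z hz)]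
  have ht : (0:ℝ) < 1 - ‖dil h g z‖ ^ 2 := by
    nlinarith [norm_nonneg (dil h g z)]
  have htC : ((1 - ‖dil h g z‖ ^ 2 : ℝ) : ℂ)
      = 1 - dil h g z * (starRingEnd ℂ) (dil h g z) := by
    push_cast
    rw [Complex.mul_conj]
    norm_cast
    rw [Complex.sq_norm]
  have htne : ((1 - ‖dil h g z‖ ^ 2 : ℝ) : ℂ) ≠ 0 :=
    Complex.ofReal_ne_zero.mpr (ne_of_gt ht)
  have h1 : ∀ l : ℂ, ‖l‖ = 1 → 1 + l * dil h g z ≠ 0 := by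
    intro l hl
    apply one_add_ne
    rw [norm_mul, hl, one_mul]; exact hωz
  -- T
  set T : ℂ := ((1 - ‖z‖ ^ 2 : ℝ) : ℂ) / 2 * deriv (dil h g) z /
      ((1 - ‖dil h g z‖ ^ 2 : ℝ) : ℂ) with hTdef
  -- Schwarz-Pick bound on |T|
  have hTb : ‖T‖ ≤ 1 / 2 := by
    have hdiff : DifferentiableOn ℂ (dil h g) (ball 0 1) := by
      intro w hw
      exact ((hgA.deriv w hw).differentiableAt.div (hhA.deriv w hw).differentiableAt
        (hh' w hw)).differentiableWithinAt
    have hmaps : MapsTo (dil h g) (ball 0 1) (ball 0 1) := by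
      intro w hw
      rw [mem_ball_zero_iff]
      exact hωlt w hw
    have hsp := schwarz_pick hdiff hmaps hz
    have hA : (0:ℝ) < 1 - ‖z‖ ^ 2 := by nlinarith [norm_nonneg z]
    have e : ‖T‖ = (1 - ‖z‖ ^ 2) / 2 * ‖deriv (dil h g) z‖ /
        (1 - ‖dil h g z‖ ^ 2) := by
      rw [hTdef, norm_div, norm_mul, norm_div, Complex.norm_real, Real.norm_eq_abs, Complex.norm_real, Real.norm_eq_abs,
        Complex.norm_two, abs_of_pos hA, abs_of_pos ht]
    rw [e, div_le_div_iff₀ ht (by norm_num : (0:ℝ) < 2)]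
    nlinarith [hsp]
  -- second derivative of h + l g
  have hφd : ∀ l : ℂ, deriv (fun w => h w + l * g w) z = deriv h z + l * deriv g z := by
    intro l
    rw [deriv_fun_add ((hh z hz).differentiableAt) (((hg z hz).differentiableAt).const_mul l),
      deriv_const_mul l ((hg z hz).differentiableAt)]
  have hφdd : ∀ l : ℂ, deriv (deriv (fun w => h w + l * g w)) z
      = deriv (deriv h) z + l * deriv (deriv g) z := by
    intro l
    have e : (fun w => deriv h w + l * deriv g w) =ᶠ[nhds z] deriv (fun w => h w + l * g w) := by
      filter_upwards [hmem] with w hw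
      rw [deriv_fun_add ((hh w hw).differentiableAt) (((hg w hw).differentiableAt).const_mul l),
        deriv_const_mul l ((hg w hw).differentiableAt)]
    rw [← e.deriv_eq, deriv_fun_add hhd (hgd.const_mul l), deriv_const_mul l hgd]
  -- main identity
  have main : ∀ l : ℂ, ‖l‖ = 1 →
      Aan (fun w => h w + l * g w) z
        = Af h g z + ((l + (starRingEnd ℂ) (dil h g z)) / (1 + l * dil h g z)) * T := by
    intro l hl
    show (((1 - ‖z‖ ^ 2 : ℝ) : ℂ)) / 2 *
        (deriv (deriv fun w => h w + l * g w) z / deriv (fun w => h w + l * g w) z) -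
        (starRingEnd ℂ) z = _
    rw [hφd l, hφdd l]
    show _ = (((1 - ‖z‖ ^ 2 : ℝ) : ℂ)) / 2 *
        (deriv (deriv h) z / deriv h z -
          (starRingEnd ℂ) (dil h g z) * deriv (dil h g) z /
            ((1 - ‖dil h g z‖ ^ 2 : ℝ) : ℂ)) - (starRingEnd ℂ) z + _ * T
    rw [hTdef]
    have := alg_full (deriv h z) (deriv g z) (deriv (deriv h) z) (deriv (deriv g) z) l
      ((starRingEnd ℂ) (dil h g z)) (((1 - ‖z‖ ^ 2 : ℝ) : ℂ) / 2)
      ((1 - ‖dil h g z‖ ^ 2 : ℝ) : ℂ) ((starRingEnd ℂ) z)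
      (dil h g z) (deriv (dil h g) z) (hh' z hz) rfl hdil (h1 l hl) htne htC
    linear_combination this
  -- |σ(l)| = 1
  have habs1 : ∀ l : ℂ, ‖l‖ = 1 →
      ‖(l + (starRingEnd ℂ) (dil h g z)) / (1 + l * dil h g z)‖ = 1 := by
    intro l hl
    have hne := h1 l hl
    have hll : l * (starRingEnd ℂ) l = 1 := by
      rw [Complex.mul_conj]
      norm_cast
      rw [← Complex.sq_norm, hl]; norm_num
    have e : l + (starRingEnd ℂ) (dil h g z) = l * (starRingEnd ℂ) (1 + l * dil h g z) := by
      rw [map_add, map_one, map_mul]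
      linear_combination (-(starRingEnd ℂ) (dil h g z)) * hll
    rw [e, norm_div, norm_mul, Complex.norm_conj, hl, one_mul,
      div_self (norm_ne_zero_iff.mpr hne)]
  refine ⟨T, hTb, ?_, ?_⟩
  · intro l hl
    exact ⟨_, habs1 l hl, main l hl⟩
  · intro u hu
    -- choose l = (u - conj ω)/(1 - u ω)
    have hne2 : (1:ℂ) - u * dil h g z ≠ 0 := by
      rw [sub_eq_add_neg]
      apply one_add_ne
      rw [norm_neg, norm_mul, hu, one_mul]
      exact hωz
    set l : ℂ := (u - (starRingEnd ℂ) (dil h g z)) / (1 - u * dil h g z) with hldef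
    have huu : u * (starRingEnd ℂ) u = 1 := by
      rw [Complex.mul_conj]
      norm_cast
      rw [← Complex.sq_norm, hu]; norm_num
    have e : u - (starRingEnd ℂ) (dil h g z) = u * (starRingEnd ℂ) (1 - u * dil h g z) := by
      rw [map_sub, map_one, map_mul]
      linear_combination (starRingEnd ℂ) (dil h g z) * huu
    have hlabs : ‖l‖ = 1 := by
      rw [hldef, e, norm_div, norm_mul, Complex.norm_conj, hu, one_mul,
        div_self (norm_ne_zero_iff.mpr hne2)]
    have hσu : (l + (starRingEnd ℂ) (dil h g z)) / (1 + l * dil h g z) = u := by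
      have h5 : l * (1 - u * dil h g z) = u - (starRingEnd ℂ) (dil h g z) := by
        rw [hldef]; field_simp
      rw [div_eq_iff (h1 l hlabs)]
      linear_combination h5
    refine ⟨l, hlabs, ?_⟩
    rw [main l hlabs, hσu]

/-- if μ(f_λ) = 1 for every |λ| = 1 (as for concave univalent f_λ),
then 1 ≤ μ(f) ≤ 3/2. -/
theorem stmt_9 (h g : ℂ → ℂ) (hf : SensePreserving h g)
    (hconc : ∀ lam : ℂ, ‖lam‖ = 1 →
      sInf ((fun z => ‖Aan (fun w => h w + lam * g w) z‖) '' 𝔻) = 1) :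
    1 ≤ sInf ((fun z => ‖Af h g z‖) '' 𝔻) ∧
    sInf ((fun z => ‖Af h g z‖) '' 𝔻) ≤ 3 / 2 := by
  have h0D : (0:ℂ) ∈ 𝔻 := mem_ball_self one_pos
  have hne : ((fun z => ‖Af h g z‖) '' 𝔻).Nonempty := ⟨_, ⟨0, h0D, rfl⟩⟩
  have hbdd : BddBelow ((fun z => ‖Af h g z‖) '' 𝔻) := by
    refine ⟨0, ?_⟩
    rintro x ⟨w, _, rfl⟩
    exact norm_nonneg _
  constructor
  · -- lower bound
    apply le_csInf hne
    rintro x ⟨z, hz, rfl⟩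
    show 1 ≤ ‖Af h g z‖
    obtain ⟨T, hT, _, hdir2⟩ := key_lemma h g hf hz
    have hAll : ∀ u : ℂ, ‖u‖ = 1 → 1 ≤ ‖Af h g z + u * T‖ := by
      intro u hu
      obtain ⟨l, hl, heq⟩ := hdir2 u hu
      have hbdd' : BddBelow ((fun z => ‖Aan (fun w => h w + l * g w) z‖) '' 𝔻) := by
        refine ⟨0, ?_⟩
        rintro x ⟨w, _, rfl⟩
        exact norm_nonneg _
      have hle := csInf_le hbdd' ⟨z, hz, rfl⟩
      rw [hconc l hl] at hle
      have hle' : 1 ≤ ‖Aan (fun w => h w + l * g w) z‖ := hle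
      rwa [heq] at hle'
    by_cases hTz : T = 0
    · have := hAll 1 (by simp)
      simpa [hTz] using this
    · by_cases hAfz : Af h g z = 0
      · exfalso
        have := hAll 1 (by simp)
        rw [hAfz, zero_add, one_mul] at this
        linarith
      · set u : ℂ := -(((‖T‖ : ℝ) : ℂ) / ((‖Af h g z‖ : ℝ) : ℂ)
          * (Af h g z / T)) with hudef
        have hTne : ((‖T‖ : ℝ) : ℂ) ≠ 0 :=
          Complex.ofReal_ne_zero.mpr (norm_ne_zero_iff.mpr hTz)
        have hAne : ((‖Af h g z‖ : ℝ) : ℂ) ≠ 0 :=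
          Complex.ofReal_ne_zero.mpr (norm_ne_zero_iff.mpr hAfz)
        have hu : ‖u‖ = 1 := by
          rw [hudef, norm_neg, norm_mul, norm_div, norm_div, Complex.norm_real, Real.norm_eq_abs,
            Complex.norm_real, Real.norm_eq_abs, _root_.abs_of_nonneg (norm_nonneg T),
            _root_.abs_of_nonneg (norm_nonneg (Af h g z))]
          field_simp [norm_ne_zero_iff.mpr hTz, norm_ne_zero_iff.mpr hAfz]
        have hsum : Af h g z + u * T
            = Af h g z * (((‖Af h g z‖ - ‖T‖ : ℝ) : ℂ)
              / ((‖Af h g z‖ : ℝ) : ℂ)) := by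
          rw [hudef]
          push_cast
          field_simp
          ring
        have habs2 : ‖Af h g z + u * T‖
            = |‖Af h g z‖ - ‖T‖| := by
          rw [hsum, norm_mul, norm_div, Complex.norm_real, Real.norm_eq_abs, Complex.norm_real, Real.norm_eq_abs,
            _root_.abs_of_nonneg (norm_nonneg (Af h g z))]
          field_simp [norm_ne_zero_iff.mpr hAfz]
        have := hAll u hu
        rw [habs2] at this
        rcases abs_cases (‖Af h g z‖ - ‖T‖) with ⟨he, _⟩ | ⟨he, _⟩ <;>
          rw [he] at this <;> linarith [norm_nonneg T, norm_nonneg (Af h g z)]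
  · -- upper bound
    apply le_of_forall_pos_le_add
    intro ε hε
    have h1c := hconc 1 (by simp)
    have hne1 : ((fun z => ‖Aan (fun w => h w + 1 * g w) z‖) '' 𝔻).Nonempty :=
      ⟨_, ⟨0, h0D, rfl⟩⟩
    have hlt : sInf ((fun z => ‖Aan (fun w => h w + 1 * g w) z‖) '' 𝔻) < 1 + ε := by
      rw [h1c]; linarith
    obtain ⟨x, ⟨z, hz, rfl⟩, hx⟩ := exists_lt_of_csInf_lt hne1 hlt
    have hx' : ‖Aan (fun w => h w + 1 * g w) z‖ < 1 + ε := hx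
    obtain ⟨T, hT, hdir1, _⟩ := key_lemma h g hf hz
    obtain ⟨u, hu, heq⟩ := hdir1 1 (by simp)
    have hAfb : ‖Af h g z‖ ≤ 3 / 2 + ε := by
      have : Af h g z = Aan (fun w => h w + 1 * g w) z - u * T := by
        rw [heq]; ring
      rw [this]
      calc ‖Aan (fun w => h w + 1 * g w) z - u * T‖
          ≤ ‖Aan (fun w => h w + 1 * g w) z‖ + ‖u * T‖ := by
            simpa [sub_eq_add_neg, norm_neg] using
              norm_add_le (Aan (fun w => h w + 1 * g w) z) (-(u * T))
        _ ≤ (1 + ε) + 1 / 2 := by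
            rw [norm_mul, hu, one_mul]
            linarith
        _ ≤ 3 / 2 + ε := by linarith
    exact (csInf_le hbdd ⟨z, hz, rfl⟩).trans hAfb
end
end

section
/- For n ≥ 2, the harmonic mapping f(z) = z + (1/n)·conj(z)^n on the unit disk satisfies |A_f(z)| = |z| + ((n-1)/2)·|z|^{2n-3}/(1 + |z|² + |z|⁴ + ⋯ + |z|^{2(n-2)}) for all z ∈ D, and consequently ‖A_f‖ := sup_{z∈D}|A_f(z)| = 3/2. -/
open Complex Metric Set

noncomputable section

/-!
Here `ω = z^{n-1}`, so `conj(ω) ω' = (n-1) |z|^{2n-4} conj z` and `A_f(z)` is a positive real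
multiple of `-conj z`; its modulus depends only on `r = |z|`, and the geometric sum
`1 - r^{2n-2} = (1 - r²)(1 + r² + ⋯ + r^{2(n-2)})` turns it into the stated profile. Each of the
`n - 1` terms of that sum is at least `r^{2n-3}`, so the profile stays below `r + 1/2 < 3/2`, while
by continuity it tends to `3/2` as `r → 1`.
-/

open Filter Topology

-- `radialProfile (n - 2) ‖z‖` is the right-hand side of the formula for `‖A_f(z)‖`.
def radialProfile (m : ℕ) (r : ℝ) : ℝ :=
  r + ((m : ℝ) + 1) / 2 * r ^ (2 * m + 1) / ∑ k ∈ Finset.range (m + 1), r ^ (2 * k)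

lemma one_le_sum_range_pow_two_mul (m : ℕ) (r : ℝ) :
    1 ≤ ∑ k ∈ Finset.range (m + 1), r ^ (2 * k) := by
  rw [Finset.sum_range_succ']
  simp only [mul_zero, pow_zero, le_add_iff_nonneg_left]
  exact Finset.sum_nonneg fun k _ => (even_two_mul _).pow_nonneg r

lemma one_sub_sq_mul_sum_range_pow_two_mul (m : ℕ) (r : ℝ) :
    (1 - r ^ 2) * ∑ k ∈ Finset.range (m + 1), r ^ (2 * k) = 1 - r ^ (2 * m + 2) := by
  simp only [pow_mul, mul_neg_geom_sum]
  ring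

lemma continuous_radialProfile (m : ℕ) : Continuous (radialProfile m) := by
  unfold radialProfile
  refine continuous_id.add (Continuous.div (by fun_prop) (by fun_prop) fun r => ?_)
  exact (zero_lt_one.trans_le (one_le_sum_range_pow_two_mul m r)).ne'

lemma radialProfile_one (m : ℕ) : radialProfile m 1 = 3 / 2 := by
  simp only [radialProfile, one_pow, Finset.sum_const, Finset.card_range, nsmul_eq_mul, mul_one]
  push_cast
  field_simp
  ring

lemma radialProfile_lt_three_halves (m : ℕ) {r : ℝ} (hr₀ : 0 ≤ r) (hr₁ : r < 1) :
    radialProfile m r < 3 / 2 := by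
  set S := ∑ k ∈ Finset.range (m + 1), r ^ (2 * k)
  have hS : 0 < S := zero_lt_one.trans_le (one_le_sum_range_pow_two_mul m r)
  -- each of the `m + 1` terms of `S` dominates `r ^ (2m+1)`
  have hdom : ((m : ℝ) + 1) * r ^ (2 * m + 1) ≤ S := by
    have := Finset.card_nsmul_le_sum (Finset.range (m + 1)) (fun k => r ^ (2 * k)) (r ^ (2 * m + 1))
      fun k hk => pow_le_pow_of_le_one hr₀ hr₁.le (by have := Finset.mem_range.1 hk; omega)
    simpa [nsmul_eq_mul] using this
  have hfrac : ((m : ℝ) + 1) / 2 * r ^ (2 * m + 1) / S ≤ 1 / 2 := by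
    rw [div_le_iff₀ hS]
    linarith
  unfold radialProfile
  linarith

lemma deriv_pow_div_natCast {𝕜 : Type*} [NontriviallyNormedField 𝕜] [CharZero 𝕜] {n : ℕ}
    (hn : n ≠ 0) : deriv (fun z : 𝕜 => z ^ n / n) = fun z => z ^ (n - 1) := by
  funext z
  rw [deriv_div_const, deriv_pow_field]
  field_simp

lemma Af_id_left (g : ℂ → ℂ) (z : ℂ) :
    Af (fun w => w) g z = -(starRingEnd ℂ) z - ((1 - ‖z‖ ^ 2 : ℝ) : ℂ) / 2 *
      ((starRingEnd ℂ) (deriv g z) * deriv (deriv g) z / ((1 - ‖deriv g z‖ ^ 2 : ℝ) : ℂ)) := by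
  have hdil : dil (fun w => w) g = deriv g := by
    funext w
    simp [dil]
  simp only [Af, Pf, hdil, deriv_id'', deriv_const', div_one, zero_sub]
  ring

lemma Af_id_of_deriv_eq_pow {g : ℂ → ℂ} {m : ℕ} (hg : deriv g = fun w => w ^ (m + 1))
    {z : ℂ} (hz : ‖z‖ < 1) :
    Af (fun w => w) g z = -((1 + (1 - ‖z‖ ^ 2) / 2 * (((m : ℝ) + 1) * ‖z‖ ^ (2 * m)) /
      (1 - ‖z‖ ^ (2 * m + 2)) : ℝ) : ℂ) * (starRingEnd ℂ) z := by
  have hden : ((1 - ‖z‖ ^ (2 * m + 2) : ℝ) : ℂ) ≠ 0 :=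
    Complex.ofReal_ne_zero.2 (sub_pos.2 (pow_lt_one₀ (norm_nonneg z) hz (by omega))).ne'
  have hg' : deriv (deriv g) z = ((m : ℂ) + 1) * z ^ m := by
    rw [hg, deriv_pow_field]
    push_cast
    ring_nf
  have hnum : (starRingEnd ℂ) (deriv g z) * deriv (deriv g) z =
      ((m : ℂ) + 1) * ((‖z‖ ^ (2 * m) : ℝ) : ℂ) * (starRingEnd ℂ) z := by
    rw [hg', hg, map_pow, pow_mul, Complex.ofReal_pow, ← Complex.normSq_eq_norm_sq,
      Complex.normSq_eq_conj_mul_self]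
    ring
  have hnorm : ‖deriv g z‖ ^ 2 = ‖z‖ ^ (2 * m + 2) := by
    rw [hg, norm_pow, ← pow_mul]
    ring_nf
  rw [Af_id_left, hnum, hnorm]
  push_cast at hden ⊢
  field_simp
  ring

lemma one_add_mul_eq_radialProfile (m : ℕ) {r : ℝ} (hr : 1 - r ^ 2 ≠ 0) :
    (1 + (1 - r ^ 2) / 2 * (((m : ℝ) + 1) * r ^ (2 * m)) / (1 - r ^ (2 * m + 2))) * r =
      radialProfile m r := by
  have hS := (zero_lt_one.trans_le (one_le_sum_range_pow_two_mul m r)).ne'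
  rw [radialProfile, ← one_sub_sq_mul_sum_range_pow_two_mul]
  field_simp
  ring

lemma norm_Af_id_of_deriv_eq_pow {g : ℂ → ℂ} {m : ℕ} (hg : deriv g = fun w => w ^ (m + 1))
    {z : ℂ} (hz : ‖z‖ < 1) :
    ‖Af (fun w => w) g z‖ = radialProfile m ‖z‖ := by
  have hsq : ‖z‖ ^ 2 < 1 := pow_lt_one₀ (norm_nonneg z) hz two_ne_zero
  have hpow : ‖z‖ ^ (2 * m + 2) < 1 := pow_lt_one₀ (norm_nonneg z) hz (by omega)
  have hc : 0 ≤ (1 - ‖z‖ ^ 2) / 2 * (((m : ℝ) + 1) * ‖z‖ ^ (2 * m)) /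
      (1 - ‖z‖ ^ (2 * m + 2)) :=
    div_nonneg (mul_nonneg (by linarith) (by positivity)) (by linarith)
  rw [Af_id_of_deriv_eq_pow hg hz, norm_mul, norm_neg, Complex.norm_real, Complex.norm_conj,
    Real.norm_of_nonneg (by linarith), one_add_mul_eq_radialProfile m (by linarith)]

lemma isLUB_image_radialProfile (m : ℕ) :
    IsLUB (radialProfile m '' Ico 0 1) (3 / 2) := by
  refine isLUB_of_mem_closure ?_ ?_
  · rintro _ ⟨r, ⟨hr₀, hr₁⟩, rfl⟩
    exact (radialProfile_lt_three_halves m hr₀ hr₁).le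
  · have hlim : Tendsto (radialProfile m) (𝓝[<] 1) (𝓝 (3 / 2)) := by
      rw [← radialProfile_one m]
      exact (continuous_radialProfile m).continuousWithinAt.tendsto
    refine mem_closure_of_tendsto hlim ?_
    filter_upwards [Ioo_mem_nhdsLT (zero_lt_one' ℝ)] with r hr
    exact mem_image_of_mem _ (Ioo_subset_Ico_self hr)

lemma norm_image_unitDisk : norm '' 𝔻 = Ico (0 : ℝ) 1 := by
  ext r
  constructor
  · rintro ⟨z, hz, rfl⟩
    exact ⟨norm_nonneg z, mem_ball_zero_iff.1 hz⟩
  · rintro ⟨hr₀, hr₁⟩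
    refine ⟨r, mem_ball_zero_iff.2 ?_, ?_⟩ <;> simp [abs_of_nonneg hr₀, hr₁]

/-- for f(z) = z + (1/n)·conj(z)^n, n ≥ 2,
|A_f(z)| = |z| + ((n-1)/2)|z|^{2n-3}/(1+|z|²+⋯+|z|^{2(n-2)}) and ‖A_f‖ = 3/2. -/
theorem stmt_12 (n : ℕ) (hn : 2 ≤ n)
    (h g : ℂ → ℂ)
    (hh : ∀ z, h z = z)
    (hg : ∀ z, g z = z ^ n / (n : ℂ)) :
    (∀ z ∈ 𝔻,
        ‖Af h g z‖ =
          ‖z‖ +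
            ((n : ℝ) - 1) / 2 * ‖z‖ ^ (2 * n - 3) /
              (∑ k ∈ Finset.range (n - 1), ‖z‖ ^ (2 * k))) ∧
    sSup ((fun z => ‖Af h g z‖) '' 𝔻) = 3 / 2 := by
  obtain ⟨m, rfl⟩ := Nat.exists_eq_add_of_le' hn
  obtain rfl : h = fun w => w := funext hh
  obtain rfl : g = fun w => w ^ (m + 2) / ((m + 2 : ℕ) : ℂ) := funext hg
  have hg' : deriv (fun w : ℂ => w ^ (m + 2) / ((m + 2 : ℕ) : ℂ)) = fun w => w ^ (m + 1) :=
    deriv_pow_div_natCast (by omega)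
  have hnorm : ∀ z ∈ 𝔻, ‖Af (fun w => w) _ z‖ = radialProfile m ‖z‖ :=
    fun z hz => norm_Af_id_of_deriv_eq_pow hg' (mem_ball_zero_iff.1 hz)
  refine ⟨fun z hz => ?_, ?_⟩
  · rw [hnorm z hz, radialProfile, show 2 * (m + 2) - 3 = 2 * m + 1 by omega,
      show m + 2 - 1 = m + 1 by omega]
    push_cast
    ring
  · rw [image_congr hnorm, ← image_image (radialProfile m), norm_image_unitDisk]
    exact (isLUB_image_radialProfile m).csSup_eq ⟨_, mem_image_of_mem _ (left_mem_Ico.2 one_pos)⟩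
end
end
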